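/- arXiv:2604.20741 — 9 statements merged into one kernel-verified Lean document; each statement's English description precedes it below -/
import Mathlib

section
/- Let (S, μ) be a σ-finite measure space and let f_1, …, f_N : S → ℝ be measurable functions that are square-integrable with respect to μ. Then det ( (∫_S f_i f_j dμ)_{1 ≤ i,j ≤ N} ) = (1/N!) ∫_{S^N} ( det ( f_j(z_i) )_{1 ≤ i,j ≤ N} )² dμ^{⊗N}(z_1, …, z_N), where μ^{⊗N} denotes the N-fold product measure on S^N. -/
/-!
Expanding both determinants by the Leibniz formula, `det (f j (z i)) * det (g j (z i))` becomes a
signed double sum over permutations `σ, τ` of products `∏ i, f (σ i) (z i) * g (τ i) (z i)`, each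
of which separates in the coordinates of `z`. By Fubini every such product integrates to
`∏ i, ∫ f (σ i) * g (τ i) dμ`, and the substitution `τ = ρ * σ` collapses the inner sum over `τ`
to the determinant of the Gram matrix, once for each of the `N!` permutations `σ`.
-/

open MeasureTheory Equiv Finset

namespace Matrix

variable {n R α : Type*} [Fintype n] [DecidableEq n] [CommRing R]

theorem det_eq_sum_sign_mul_prod_apply (M : Matrix n n R) :
    M.det = ∑ σ : Perm n, ((Perm.sign σ : ℤ) : R) * ∏ i, M i (σ i) := by
  rw [← det_transpose, det_apply']
  rfl

theorem sum_sum_sign_mul_sign_mul_prod (G : Matrix n n R) :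
    ∑ σ : Perm n, ∑ τ : Perm n,
        ((Perm.sign σ : ℤ) : R) * ((Perm.sign τ : ℤ) : R) * ∏ i, G (σ i) (τ i)
      = (Fintype.card n).factorial * G.det := by
  have inner (σ : Perm n) :
      ∑ τ : Perm n, ((Perm.sign σ : ℤ) : R) * ((Perm.sign τ : ℤ) : R) * ∏ i, G (σ i) (τ i)
        = G.det := by
    rw [det_eq_sum_sign_mul_prod_apply]
    refine (Fintype.sum_equiv (Equiv.mulRight σ) _ _ fun ρ => ?_).symm
    have hprod : ∏ i, G (σ i) ((ρ * σ) i) = ∏ j, G j (ρ j) :=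
      Equiv.prod_comp σ fun j => G j (ρ j)
    have hsign : ((Perm.sign σ : ℤ) : R) * ((Perm.sign σ : ℤ) : R) = 1 := by
      rw [← Int.cast_mul, ← Units.val_mul, Int.units_mul_self, Units.val_one, Int.cast_one]
    simp only [Equiv.coe_mulRight, Perm.sign_mul, Units.val_mul, Int.cast_mul, hprod]
    linear_combination (-(((Perm.sign ρ : ℤ) : R) * ∏ j, G j (ρ j))) * hsign
  simp only [inner, sum_const, card_univ, Fintype.card_perm, nsmul_eq_mul]

theorem det_of_mul_det_of_eq_sum_sum (f g : n → α → R) (z : n → α) :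
    (Matrix.of fun i j => f j (z i)).det * (Matrix.of fun i j => g j (z i)).det
      = ∑ σ : Perm n, ∑ τ : Perm n, ((Perm.sign σ : ℤ) : R) * ((Perm.sign τ : ℤ) : R) *
          ∏ i, f (σ i) (z i) * g (τ i) (z i) := by
  rw [det_eq_sum_sign_mul_prod_apply, det_eq_sum_sign_mul_prod_apply, sum_mul_sum]
  refine sum_congr rfl fun σ _ => sum_congr rfl fun τ _ => ?_
  simp only [Matrix.of_apply, prod_mul_distrib]
  ring

end Matrix

namespace MeasureTheory

variable {n S 𝕜 : Type*} [Fintype n] [DecidableEq n] [RCLike 𝕜] [MeasurableSpace S]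

/-- **Andréief's identity.** -/
theorem integral_det_mul_det (μ : Measure S) [SigmaFinite μ] (f g : n → S → 𝕜)
    (hfg : ∀ i j, Integrable (fun s => f i s * g j s) μ) :
    ∫ z, (Matrix.of fun i j => f j (z i)).det * (Matrix.of fun i j => g j (z i)).det
        ∂(Measure.pi fun _ => μ)
      = ((Fintype.card n).factorial : 𝕜) * (Matrix.of fun i j => ∫ s, f i s * g j s ∂μ).det := by
  have hprod (σ τ : Perm n) :
      Integrable (fun z : n → S => ∏ i, f (σ i) (z i) * g (τ i) (z i))
        (Measure.pi fun _ => μ) :=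
    Integrable.fintype_prod fun i => hfg (σ i) (τ i)
  simp_rw [Matrix.det_of_mul_det_of_eq_sum_sum]
  rw [integral_finsetSum _ fun σ _ => integrable_finsetSum _ fun τ _ =>
    (hprod σ τ).const_mul _, ← Matrix.sum_sum_sign_mul_sign_mul_prod]
  refine sum_congr rfl fun σ _ => ?_
  rw [integral_finsetSum _ fun τ _ => (hprod σ τ).const_mul _]
  refine sum_congr rfl fun τ _ => ?_
  rw [integral_const_mul, integral_fintype_prod_eq_prod (fun i s => f (σ i) s * g (τ i) s)]
  rfl

end MeasureTheory

theorem gram_det_eq_integral_vandermonde_sq_general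
    {S : Type*} [MeasurableSpace S] (μ : Measure S) [SigmaFinite μ] (N : ℕ)
    (f : Fin N → S → ℝ)
    (hL2 : ∀ i, MemLp (f i) 2 μ) :
    (Matrix.of fun i j : Fin N => ∫ s, f i s * f j s ∂μ).det
      = (1 / (N.factorial : ℝ)) *
        ∫ z : Fin N → S, ((Matrix.of fun i j : Fin N => f j (z i)).det) ^ 2
          ∂(Measure.pi fun _ => μ) := by
  simp_rw [sq, integral_det_mul_det μ f f fun i j => (hL2 i).integrable_mul (hL2 j),
    Fintype.card_fin]
  field_simp

/-- Andréief–Heine identity, symmetric case. For square-integrable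
measurable functions `f 1, …, f N` on a σ-finite measure space,
`det (∫ f i * f j dμ) = (1/N!) ∫_{S^N} (det (f j (z i)))² dμ^⊗N`. -/
theorem gram_det_eq_integral_vandermonde_sq
    {S : Type*} [MeasurableSpace S] (μ : Measure S) [SigmaFinite μ] (N : ℕ)
    (f : Fin N → S → ℝ) (hmeas : ∀ i, Measurable (f i))
    (hL2 : ∀ i, MemLp (f i) 2 μ) :
    (Matrix.of fun i j : Fin N => ∫ s, f i s * f j s ∂μ).det
      = (1 / (N.factorial : ℝ)) *
        ∫ z : Fin N → S, ((Matrix.of fun i j : Fin N => f j (z i)).det) ^ 2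
          ∂(Measure.pi fun _ => μ) :=
  gram_det_eq_integral_vandermonde_sq_general μ N f hL2
end

section
/- Let (S, μ) be a σ-finite measure space with μ(S) < ∞, and let f_1, …, f_N : S → ℝ be measurable square-integrable functions. Let Q be the N×N matrix with entries Q_{ij} = ∫_S f_i f_j dμ, and let t = sup { |det( f_j(z_i) )_{1 ≤ i,j ≤ N}| : z_1, …, z_N ∈ S }. Then |det Q| ≤ (μ(S)^N / N!) · t². In particular, if N! ≥ μ(S)^N, then |det Q| ≤ t². -/
open MeasureTheory
open scoped ENNReal

/-!
Andréief's identity: expanding both determinants as sums over permutations and integrating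
coordinatewise (Fubini), `∫_{S^N} det(f_j(z_i))² dμ^N(z) = N! · det Q`. The integrand is at
most `t²` pointwise and `μ^N(S^N) = μ(S)^N`, which gives `N! · |det Q| ≤ μ(S)^N · t²`.
-/

open Equiv

namespace Matrix

variable {ι R : Type*} [Fintype ι] [DecidableEq ι] [CommRing R]

theorem det_mul_det_eq_sum_perm_sum_perm (A B : Matrix ι ι R) :
    A.det * B.det = ∑ σ : Perm ι, ∑ τ : Perm ι,
      (((σ.sign * τ.sign : ℤˣ) : ℤ) : R) * ∏ j, A j (σ j) * B j (τ j) := by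
  rw [← det_transpose A, ← det_transpose B, det_apply', det_apply', Finset.sum_mul_sum]
  refine Finset.sum_congr rfl fun σ _ => Finset.sum_congr rfl fun τ _ => ?_
  rw [Finset.prod_mul_distrib, Units.val_mul, Int.cast_mul]
  simp only [transpose_apply]
  ring

theorem sum_perm_sum_perm_sign_mul_prod_eq_factorial_mul_det (G : Matrix ι ι R) :
    ∑ σ : Perm ι, ∑ τ : Perm ι, (((σ.sign * τ.sign : ℤˣ) : ℤ) : R) * ∏ j, G (σ j) (τ j) =
      (Fintype.card ι).factorial * G.det := by
  have hτ : ∀ τ : Perm ι, ∑ σ : Perm ι,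
      (((σ.sign * τ.sign : ℤˣ) : ℤ) : R) * ∏ j, G (σ j) (τ j) = G.det := by
    intro τ
    -- substitute `σ = ρ * τ`
    rw [det_apply', ← Equiv.sum_comp (Equiv.mulRight τ)]
    refine Finset.sum_congr rfl fun ρ _ => ?_
    rw [coe_mulRight, Perm.sign_mul, mul_assoc, Int.units_mul_self, mul_one]
    exact congrArg _ (Equiv.prod_comp τ fun i => G (ρ i) i)
  rw [Finset.sum_comm, Finset.sum_congr rfl fun τ _ => hτ τ, Finset.sum_const, Finset.card_univ,
    Fintype.card_perm, nsmul_eq_mul]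

end Matrix

theorem integral_det_mul_det_eq_factorial_mul_det_gram {ι S 𝕜 : Type*} [Fintype ι]
    [DecidableEq ι] [MeasurableSpace S] [RCLike 𝕜] (μ : Measure S) [SigmaFinite μ]
    (f g : ι → S → 𝕜) (hfg : ∀ i j, Integrable (fun s => f i s * g j s) μ) :
    ∫ z : ι → S, (Matrix.of fun i j => f j (z i)).det * (Matrix.of fun i j => g j (z i)).det
        ∂(Measure.pi fun _ => μ) =
      ((Fintype.card ι).factorial : 𝕜) * (Matrix.of fun i j => ∫ s, f i s * g j s ∂μ).det := by
  have hprod : ∀ σ τ : Perm ι, Integrable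
      (fun z : ι → S => ∏ j, f (σ j) (z j) * g (τ j) (z j)) (Measure.pi fun _ => μ) :=
    fun σ τ => Integrable.fintype_prod fun j => hfg (σ j) (τ j)
  simp_rw [Matrix.det_mul_det_eq_sum_perm_sum_perm, Matrix.of_apply]
  rw [← Matrix.sum_perm_sum_perm_sign_mul_prod_eq_factorial_mul_det,
    integral_finsetSum _ fun σ _ => integrable_finsetSum _ fun τ _ => (hprod σ τ).const_mul _]
  refine Finset.sum_congr rfl fun σ _ => ?_
  rw [integral_finsetSum _ fun τ _ => (hprod σ τ).const_mul _]
  refine Finset.sum_congr rfl fun τ _ => ?_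
  rw [integral_const_mul, integral_fintype_prod_eq_prod (fun j s => f (σ j) s * g (τ j) s)]
  rfl

theorem abs_gram_det_le_vandermonde_sup_sq_general
    {S : Type*} [MeasurableSpace S] (μ : Measure S) [SigmaFinite μ]
    (N : ℕ)
    (f : Fin N → S → ℝ)
    (hL2 : ∀ i, MemLp (f i) 2 μ)
    (t : ℝ≥0∞)
    (ht : t = ⨆ z : Fin N → S,
      (‖(Matrix.of fun i j : Fin N => f j (z i)).det‖₊ : ℝ≥0∞)) :
    ENNReal.ofReal |(Matrix.of fun i j : Fin N => ∫ s, f i s * f j s ∂μ).det|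
        ≤ (μ Set.univ) ^ N / (N.factorial : ℝ≥0∞) * t ^ 2 ∧
      ((μ Set.univ) ^ N ≤ (N.factorial : ℝ≥0∞) →
        ENNReal.ofReal |(Matrix.of fun i j : Fin N => ∫ s, f i s * f j s ∂μ).det|
          ≤ t ^ 2) := by
  set D : (Fin N → S) → ℝ := fun z => (Matrix.of fun i j : Fin N => f j (z i)).det
  have handreief := integral_det_mul_det_eq_factorial_mul_det_gram μ f f
    fun i j => (hL2 i).integrable_mul (hL2 j)
  rw [Fintype.card_fin] at handreief
  have hD : ∀ z, ‖D z * D z‖ₑ ≤ t ^ 2 := fun z => by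
    rw [enorm_mul, ← sq, ht]
    exact pow_le_pow_left' (le_iSup (fun z => ‖D z‖ₑ) z) 2
  have hbound : ‖∫ z, D z * D z ∂(Measure.pi fun _ => μ)‖ₑ ≤ μ Set.univ ^ N * t ^ 2 :=
    calc _ ≤ (⨆ z, ‖D z * D z‖ₑ) * (Measure.pi fun _ => μ) Set.univ :=
          (enorm_integral_le_lintegral_enorm _).trans (lintegral_le_iSup_mul _)
      _ ≤ t ^ 2 * μ Set.univ ^ N := by
          rw [Measure.pi_univ, Finset.prod_const, Finset.card_univ, Fintype.card_fin]
          exact mul_le_mul_left (iSup_le hD) _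
      _ = μ Set.univ ^ N * t ^ 2 := mul_comm _ _
  have main : ENNReal.ofReal |(Matrix.of fun i j : Fin N => ∫ s, f i s * f j s ∂μ).det|
      ≤ μ Set.univ ^ N / N.factorial * t ^ 2 := by
    rw [← Real.enorm_eq_ofReal_abs, ← ENNReal.mul_div_right_comm,
      ENNReal.le_div_iff_mul_le (by simp [N.factorial_ne_zero]) (by simp), mul_comm,
      ← Real.enorm_natCast, ← enorm_mul, ← handreief]
    exact hbound
  refine ⟨main, fun h => main.trans ?_⟩
  calc μ Set.univ ^ N / N.factorial * t ^ 2 ≤ 1 * t ^ 2 :=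
        mul_le_mul_left (ENNReal.div_le_of_le_mul (by simpa using h)) _
    _ = t ^ 2 := one_mul _

/-- For a finite measure `μ` on a σ-finite measure space and
square-integrable measurable functions `f 1, …, f N`, the Gram determinant satisfies
`|det Q| ≤ μ(S)^N / N! · t²` where `t` is the supremum of the absolute generalized
Vandermonde determinant over `S^N`; in particular `|det Q| ≤ t²` once `μ(S)^N ≤ N!`. -/
theorem abs_gram_det_le_vandermonde_sup_sq
    {S : Type*} [MeasurableSpace S] (μ : Measure S) [SigmaFinite μ]
    (hfin : μ Set.univ < ⊤) (N : ℕ)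
    (f : Fin N → S → ℝ) (hmeas : ∀ i, Measurable (f i))
    (hL2 : ∀ i, MemLp (f i) 2 μ)
    (t : ℝ≥0∞)
    (ht : t = ⨆ z : Fin N → S,
      (‖(Matrix.of fun i j : Fin N => f j (z i)).det‖₊ : ℝ≥0∞)) :
    ENNReal.ofReal |(Matrix.of fun i j : Fin N => ∫ s, f i s * f j s ∂μ).det|
        ≤ (μ Set.univ) ^ N / (N.factorial : ℝ≥0∞) * t ^ 2 ∧
      ((μ Set.univ) ^ N ≤ (N.factorial : ℝ≥0∞) →
        ENNReal.ofReal |(Matrix.of fun i j : Fin N => ∫ s, f i s * f j s ∂μ).det|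
          ≤ t ^ 2) :=
  abs_gram_det_le_vandermonde_sup_sq_general μ N f hL2 t ht
end

section
/- Let S be a set and τ ⊆ S. For each n ≥ 1 let F_n be a list of r_n functions S → ℂ and G_n a list of s_n functions S → ℂ, with r_n, s_n ≥ 1, and let H_n be the list of the r_n s_n pairwise products of a function of F_n with a function of G_n. Let e^F_n, e^G_n, e^H_n be positive integers such that e^H_n / (r_n s_n · log(r_n s_n)) → ∞, e^F_n s_n / e^H_n → α, and e^G_n r_n / e^H_n → β as n → ∞, with α, β ≥ 0. Assume that t_{F_n}(τ) and t_{G_n}(τ) are finite for each n, and that A = limsup_n t_{F_n}(τ)^{1/e^F_n} and B = limsup_n t_{G_n}(τ)^{1/e^G_n} are finite and strictly positive. Then limsup_n t_{H_n}(τ)^{1/e^H_n} ≤ A^α · B^β. -/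
/-!
Choose points `x ∈ τ^r` whose Vandermonde determinant `V` for `F` is at least half of `t_F(τ)`,
and `y`, `W` likewise for `G`. By Cramer's rule each `F_j(u)`, `u ∈ τ`, is a combination of the
`F_j(x_a)` with coefficients of modulus at most `2`, so every Vandermonde matrix of `H` on `τ`
factors as `C · (V ⊗ W)` with `|C_{ik}| ≤ 4`, and `t_H ≤ (rs)! 4^{rs} t_F^s t_G^r`. (If `t_F = 0`,
the `F_j` are linearly dependent on `τ`, hence so are the products, and `t_H = 0`.) After taking
`e^H`-th roots, `t_F^{s/e^H} = (t_F^{1/e^F})^{e^F s/e^H}`, whose exponent tends to `α`, and the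
growth condition makes `((rs)! 4^{rs})^{1/e^H} ≤ exp (3 rs log(rs) / e^H)` tend to `1`.
-/

open Filter
open scoped ENNReal

/-- The Vandermonde supremum `t_{(m_1,…,m_N)}(τ)`: the supremum over all tuples
`z : ι → S` of points of `τ` of the absolute value of the generalized Vandermonde
determinant `det (m j (z i))`, valued in `[0, ∞]`. -/
noncomputable def vandSup {S ι : Type*} [Fintype ι] [DecidableEq ι]
    (τ : Set S) (m : ι → S → ℂ) : ℝ≥0∞ :=
  ⨆ (z : ι → S) (_ : ∀ i, z i ∈ τ),
    (‖(Matrix.of fun i j : ι => m j (z i)).det‖₊ : ℝ≥0∞)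

open Topology
open scoped NNReal Nat Matrix

namespace Matrix

variable {R K ι κ m : Type*} [Fintype ι] [Fintype κ]

theorem exists_submatrix_det_ne_zero [Field K] [DecidableEq κ] (M : Matrix ι κ K)
    (hM : LinearIndependent K M.col) : ∃ x : κ → ι, (M.submatrix x id).det ≠ 0 := by
  obtain ⟨κ', a, ha, hspan, hli⟩ := exists_linearIndependent' K M.row
  have : Fintype κ' := Fintype.ofInjective a ha
  have hcard : Fintype.card κ = Fintype.card κ' := by
    rw [linearIndependent_iff_card_eq_finrank_span.1 hli, Set.finrank, hspan,
      ← rank_eq_finrank_span_row, ← rank_transpose, LinearIndependent.rank_matrix hM]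
  let e := Fintype.equivOfCardEq hcard
  refine ⟨a ∘ e, ?_⟩
  have hrows : LinearIndependent K (M.submatrix (a ∘ e) id).row := hli.comp e e.injective
  exact ((isUnit_iff_isUnit_det _).1 (linearIndependent_rows_iff_isUnit.1 hrows)).ne_zero

theorem of_mul_mulVec_mul [CommRing R] (P : Matrix m ι R) (Q : Matrix m κ R) (c : ι → R)
    (d : κ → R) :
    (of fun (i : m) (p : ι × κ) => P i p.1 * Q i p.2) *ᵥ (fun p => c p.1 * d p.2) =
      fun i => (P *ᵥ c) i * (Q *ᵥ d) i := by
  ext i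
  simp only [mulVec, dotProduct, of_apply, Fintype.sum_prod_type, Finset.sum_mul_sum]
  exact Finset.sum_congr rfl fun _ _ => Finset.sum_congr rfl fun _ _ => by ring

theorem det_of_mul_eq_zero [CommRing R] [IsDomain R] [DecidableEq ι] [DecidableEq κ]
    (P : Matrix (ι × κ) ι R) (Q : Matrix (ι × κ) κ R) {c : ι → R} {d : κ → R}
    (hc : c ≠ 0) (hd : d ≠ 0) (h : P *ᵥ c = 0 ∨ Q *ᵥ d = 0) :
    (of fun (i : ι × κ) (p : ι × κ) => P i p.1 * Q i p.2).det = 0 := by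
  obtain ⟨a, ha⟩ := Function.ne_iff.1 hc
  obtain ⟨b, hb⟩ := Function.ne_iff.1 hd
  refine exists_mulVec_eq_zero_iff.1 ⟨fun p => c p.1 * d p.2,
    Function.ne_iff.2 ⟨(a, b), mul_ne_zero ha hb⟩, ?_⟩
  rw [of_mul_mulVec_mul]
  rcases h with h | h <;> ext i <;> simp [h]

theorem coe_nnnorm_det_le [DecidableEq ι] (M : Matrix ι ι ℂ) {K : ℕ} (h : ∀ i j, ‖M i j‖ ≤ K) :
    (‖M.det‖₊ : ℝ≥0∞) ≤ ((Fintype.card ι)! * K ^ Fintype.card ι : ℕ) := by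
  have := det_le (abv := IsAbsoluteValue.toAbsoluteValue (norm : ℂ → ℝ)) h
  rw [← ENNReal.coe_natCast, ENNReal.coe_le_coe, ← NNReal.coe_le_coe, coe_nnnorm]
  simpa [nsmul_eq_mul] using this

end Matrix

section Vandermonde

variable {S ι κ : Type*} [Fintype ι] [Fintype κ] (τ : Set S)

/-- The paper's list `H`, indexed by pairs. -/
def mulFamily (F : ι → S → ℂ) (G : κ → S → ℂ) : ι × κ → S → ℂ :=
  fun p z => F p.1 z * G p.2 z

theorem of_mulFamily_eq_mul_kronecker {F : ι → S → ℂ} {G : κ → S → ℂ} {x : ι → S} {y : κ → S}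
    {cF : S → ι → ℂ} {cG : S → κ → ℂ} (hF : ∀ u j, ∑ a, cF u a * F j (x a) = F j u)
    (hG : ∀ u j, ∑ b, cG u b * G j (y b) = G j u) (z : ι × κ → S) :
    (Matrix.of fun i j => mulFamily F G j (z i)) =
      (Matrix.of fun i p => cF (z i) p.1 * cG (z i) p.2) *
        Matrix.kroneckerMap (· * ·) (Matrix.of fun a j => F j (x a))
          (Matrix.of fun b j => G j (y b)) := by
  ext i j
  simp only [Matrix.mul_apply, Fintype.sum_prod_type, Matrix.of_apply, Matrix.kroneckerMap_apply,
    mulFamily, ← hF (z i) j.1, ← hG (z i) j.2, Finset.sum_mul_sum]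
  exact Finset.sum_congr rfl fun _ _ => Finset.sum_congr rfl fun _ _ => by ring

variable [DecidableEq ι] [DecidableEq κ]

theorem coe_nnnorm_det_le_vandSup (m : ι → S → ℂ) {z : ι → S} (hz : ∀ i, z i ∈ τ) :
    (‖(Matrix.of fun i j => m j (z i)).det‖₊ : ℝ≥0∞) ≤ vandSup τ m :=
  le_iSup₂ (f := fun z (_ : ∀ i, z i ∈ τ) => (‖(Matrix.of fun i j => m j (z i)).det‖₊ : ℝ≥0∞))
    z hz

theorem exists_mulVec_eq_zero_of_vandSup_eq_zero {ι' : Type*} [Fintype ι'] {m : ι → S → ℂ}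
    (h : vandSup τ m = 0) {z : ι' → S} (hz : ∀ i, z i ∈ τ) :
    ∃ c ≠ 0, (Matrix.of fun i a => m a (z i)) *ᵥ c = 0 := by
  by_contra! hker
  have hcols : LinearIndependent ℂ (Matrix.of fun i a => m a (z i)).col :=
    Matrix.mulVec_injective_iff.1 <| (injective_iff_map_eq_zero (Matrix.mulVecLin _)).2
      fun c hc => by_contra fun hc0 => hker c hc0 hc
  obtain ⟨x, hx⟩ := Matrix.exists_submatrix_det_ne_zero _ hcols
  have hle := coe_nnnorm_det_le_vandSup τ m (z := z ∘ x) fun i => hz (x i)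
  rw [h, nonpos_iff_eq_zero, ENNReal.coe_eq_zero, nnnorm_eq_zero] at hle
  exact hx hle

theorem vandSup_mulFamily_eq_zero [Nonempty ι] [Nonempty κ] (F : ι → S → ℂ) (G : κ → S → ℂ)
    (h : vandSup τ F = 0 ∨ vandSup τ G = 0) : vandSup τ (mulFamily F G) = 0 := by
  refine le_antisymm (iSup₂_le fun z hz => ?_) bot_le
  obtain ⟨c, hc, d, hd, hcd⟩ : ∃ c ≠ 0, ∃ d ≠ 0,
      (Matrix.of fun i a => F a (z i)) *ᵥ c = 0 ∨ (Matrix.of fun i b => G b (z i)) *ᵥ d = 0 := by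
    rcases h with hF | hG
    · obtain ⟨c, hc, hPc⟩ := exists_mulVec_eq_zero_of_vandSup_eq_zero τ hF hz
      exact ⟨c, hc, 1, one_ne_zero, Or.inl hPc⟩
    · obtain ⟨d, hd, hQd⟩ := exists_mulVec_eq_zero_of_vandSup_eq_zero τ hG hz
      exact ⟨1, one_ne_zero, d, hd, Or.inr hQd⟩
  have hdet := Matrix.det_of_mul_eq_zero _ _ hc hd hcd
  simp only [Matrix.of_apply] at hdet
  simp [mulFamily, hdet]

theorem exists_vandSup_le_two_mul {m : ι → S → ℂ} (h0 : vandSup τ m ≠ 0)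
    (htop : vandSup τ m ≠ ⊤) :
    ∃ x : ι → S, (∀ i, x i ∈ τ) ∧ vandSup τ m ≤ 2 * ‖(Matrix.of fun i j => m j (x i)).det‖₊ := by
  have hhalf := ENNReal.half_lt_self h0 htop
  conv_rhs at hhalf => rw [vandSup]
  simp only [lt_iSup_iff] at hhalf
  obtain ⟨x, hx, hlt⟩ := hhalf
  rw [ENNReal.div_lt_iff (by norm_num) (by norm_num)] at hlt
  exact ⟨x, hx, by rw [mul_comm]; exact hlt.le⟩

noncomputable def cramerCoeff (m : ι → S → ℂ) (x : ι → S) (u : S) (a : ι) : ℂ :=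
  (Matrix.of fun i j => m j (Function.update x a u i)).det / (Matrix.of fun i j => m j (x i)).det

theorem sum_cramerCoeff_mul {m : ι → S → ℂ} {x : ι → S}
    (hx : (Matrix.of fun i j => m j (x i)).det ≠ 0) (u : S) (j : ι) :
    ∑ a, cramerCoeff m x u a * m j (x a) = m j u := by
  simp only [cramerCoeff]
  set V := Matrix.of fun i j => m j (x i)
  have hrow : ∀ a, (Matrix.of fun i j => m j (Function.update x a u i)) =
      V.updateRow a fun j => m j u := by
    intro a
    ext i k
    rcases eq_or_ne i a with rfl | hia <;> simp [Matrix.updateRow_apply, *, V]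
  have hcramer := congrFun (Vᵀ.mulVec_cramer fun j => m j u) j
  simp only [Matrix.mulVec, dotProduct, Matrix.cramer_transpose_apply, Matrix.det_transpose,
    Pi.smul_apply, smul_eq_mul, Matrix.transpose_apply] at hcramer
  simp only [hrow, div_mul_eq_mul_div, ← Finset.sum_div, div_eq_iff hx]
  rw [mul_comm, ← hcramer]
  exact Finset.sum_congr rfl fun a _ => mul_comm _ _

theorem norm_cramerCoeff_le_two {m : ι → S → ℂ} {x : ι → S} (hx : ∀ i, x i ∈ τ)
    (h2 : vandSup τ m ≤ 2 * ‖(Matrix.of fun i j => m j (x i)).det‖₊) {u : S} (hu : u ∈ τ)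
    (a : ι) : ‖cramerCoeff m x u a‖ ≤ 2 := by
  have hmem : ∀ i, Function.update x a u i ∈ τ := by
    intro i
    rcases eq_or_ne i a with rfl | hia <;> simp [*]
  have hle := (coe_nnnorm_det_le_vandSup τ m hmem).trans h2
  rw [← ENNReal.coe_ofNat, ← ENNReal.coe_mul, ENNReal.coe_le_coe, ← NNReal.coe_le_coe] at hle
  rw [cramerCoeff, norm_div]
  exact div_le_of_le_mul₀ (norm_nonneg _) zero_le_two (by simpa using hle)

theorem vandSup_mulFamily_le [Nonempty ι] [Nonempty κ] {F : ι → S → ℂ} {G : κ → S → ℂ}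
    (hF : vandSup τ F ≠ ⊤) (hG : vandSup τ G ≠ ⊤) :
    vandSup τ (mulFamily F G) ≤
      ((Fintype.card (ι × κ))! * 4 ^ Fintype.card (ι × κ) : ℕ) *
        vandSup τ F ^ Fintype.card κ * vandSup τ G ^ Fintype.card ι := by
  by_cases h0 : vandSup τ F = 0 ∨ vandSup τ G = 0
  · rw [vandSup_mulFamily_eq_zero τ F G h0]
    exact bot_le
  obtain ⟨hF0, hG0⟩ := not_or.1 h0
  obtain ⟨x, hx, hx2⟩ := exists_vandSup_le_two_mul τ hF0 hF
  obtain ⟨y, hy, hy2⟩ := exists_vandSup_le_two_mul τ hG0 hG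
  have hV : (Matrix.of fun a j => F j (x a)).det ≠ 0 := fun h => hF0 <| by simpa [h] using hx2
  have hW : (Matrix.of fun b j => G j (y b)).det ≠ 0 := fun h => hG0 <| by simpa [h] using hy2
  refine iSup₂_le fun z hz => ?_
  have hC : ∀ i (p : ι × κ), ‖cramerCoeff F x (z i) p.1 * cramerCoeff G y (z i) p.2‖ ≤ (4 : ℕ) := by
    intro i p
    rw [norm_mul]
    have := norm_cramerCoeff_le_two τ hx hx2 (hz i) p.1
    have := norm_cramerCoeff_le_two τ hy hy2 (hz i) p.2
    push_cast
    nlinarith [norm_nonneg (cramerCoeff F x (z i) p.1)]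
  rw [of_mulFamily_eq_mul_kronecker (sum_cramerCoeff_mul hV) (sum_cramerCoeff_mul hW),
    Matrix.det_mul, Matrix.det_kronecker]
  simp only [nnnorm_mul, nnnorm_pow, ENNReal.coe_mul, ENNReal.coe_pow, mul_assoc]
  gcongr
  · exact Matrix.coe_nnnorm_det_le _ hC
  · exact coe_nnnorm_det_le_vandSup τ F hx
  · exact coe_nnnorm_det_le_vandSup τ G hy

end Vandermonde

theorem Nat.factorial_mul_four_pow_le {N : ℕ} (h : 2 ≤ N) : N ! * 4 ^ N ≤ N ^ (3 * N) :=
  calc N ! * 4 ^ N ≤ N ^ N * (N ^ 2) ^ N :=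
        Nat.mul_le_mul (Nat.factorial_le_pow N) (Nat.pow_le_pow_left (by nlinarith) N)
    _ = N ^ (3 * N) := by ring

theorem ENNReal.pow_rpow_one_div_eq (v : ℝ≥0∞) (s : ℕ) {e : ℝ} (he : e ≠ 0) (e' : ℝ) :
    (v ^ s) ^ (1 / e') = (v ^ (1 / e)) ^ (e * s / e') := by
  rw [← ENNReal.rpow_natCast, ← ENNReal.rpow_mul, ← ENNReal.rpow_mul]
  congr 1
  field_simp

section Asymptotics

variable {β : Type*} {l : Filter β}

theorem eventually_two_le_of_tendsto_div_mul_log {N : β → ℕ} {e : β → ℝ}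
    (h : Tendsto (fun n => e n / (N n * Real.log (N n))) l atTop) : ∀ᶠ n in l, 2 ≤ N n := by
  filter_upwards [h.eventually_gt_atTop 0] with n hn
  by_contra! hN
  interval_cases (N n) <;> simp at hn

theorem tendsto_rpow_one_div_of_log_le {c b e : β → ℝ} (hc : ∀ x, 1 ≤ c x) (he : ∀ x, 0 ≤ e x)
    (hle : ∀ᶠ x in l, Real.log (c x) ≤ b x) (hb : Tendsto (fun x => b x / e x) l (𝓝 0)) :
    Tendsto (fun x => c x ^ (1 / e x)) l (𝓝 1) := by
  have hlog : Tendsto (fun x => Real.log (c x) / e x) l (𝓝 0) :=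
    squeeze_zero' (Eventually.of_forall fun x => div_nonneg (Real.log_nonneg (hc x)) (he x))
      (hle.mono fun x hx => div_le_div_of_nonneg_right hx (he x)) hb
  have hexp := (Real.continuous_exp.tendsto 0).comp hlog
  rw [Real.exp_zero] at hexp
  refine hexp.congr fun x => ?_
  simp [Real.rpow_def_of_pos (zero_lt_one.trans_le (hc x)), div_eq_mul_inv]

theorem tendsto_factorial_mul_four_pow_rpow_one_div {N e : β → ℕ}
    (h : Tendsto (fun n => (e n : ℝ) / (N n * Real.log (N n))) l atTop) :
    Tendsto (fun n => (((N n)! * 4 ^ N n : ℕ) : ℝ≥0∞) ^ (1 / (e n : ℝ))) l (𝓝 1) := by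
  have hreal : Tendsto (fun n => (((N n)! * 4 ^ N n : ℕ) : ℝ) ^ (1 / (e n : ℝ))) l (𝓝 1) := by
    refine tendsto_rpow_one_div_of_log_le (b := fun n => 3 * (N n * Real.log (N n)))
      (fun n => by exact_mod_cast Nat.one_le_iff_ne_zero.2 (by positivity))
      (fun n => Nat.cast_nonneg _) ?_ ?_
    · filter_upwards [eventually_two_le_of_tendsto_div_mul_log h] with n hn
      calc Real.log _ ≤ Real.log ((N n ^ (3 * N n) : ℕ) : ℝ) :=
            Real.log_le_log (by positivity) (by exact_mod_cast Nat.factorial_mul_four_pow_le hn)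
        _ = 3 * (N n * Real.log (N n)) := by push_cast; rw [Real.log_pow]; push_cast; ring
    · simpa [mul_div_assoc] using h.inv_tendsto_atTop.const_mul 3
  have hennreal := ENNReal.tendsto_ofReal hreal
  rw [ENNReal.ofReal_one] at hennreal
  refine hennreal.congr fun n => ?_
  rw [← ENNReal.ofReal_rpow_of_nonneg (Nat.cast_nonneg _) (by positivity), ENNReal.ofReal_natCast]

theorem ENNReal.limsup_rpow_le [l.NeBot] {a : β → ℝ≥0∞} {p : β → ℝ} {α : ℝ} (hp0 : ∀ x, 0 ≤ p x)
    (hp : Tendsto p l (𝓝 α)) (ha : limsup a l ≠ ⊤) :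
    limsup (fun x => a x ^ p x) l ≤ limsup a l ^ α := by
  have hbound : ∀ b, limsup a l < b → b < ⊤ → limsup (fun x => a x ^ p x) l ≤ b ^ α := by
    intro b hab hb
    lift b to ℝ≥0 using hb.ne
    have hb0 : b ≠ 0 := by rintro rfl; exact not_lt_bot hab
    have hlim : Tendsto (fun x => (b : ℝ≥0∞) ^ p x) l (𝓝 ((b : ℝ≥0∞) ^ α)) := by
      simp_rw [← ENNReal.coe_rpow_of_ne_zero hb0]
      exact ENNReal.tendsto_coe.2 (tendsto_const_nhds.nnrpow hp (Or.inl hb0))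
    calc limsup (fun x => a x ^ p x) l ≤ limsup (fun x => (b : ℝ≥0∞) ^ p x) l :=
          limsup_le_limsup <| (eventually_lt_of_limsup_lt hab).mono fun x hx =>
            ENNReal.rpow_le_rpow hx.le (hp0 x)
      _ = (b : ℝ≥0∞) ^ α := hlim.limsup_eq
  have : (𝓝[>] limsup a l).NeBot := nhdsGT_neBot_of_exists_gt ⟨⊤, ha.lt_top⟩
  refine ge_of_tendsto ((ENNReal.continuous_rpow_const.tendsto _).mono_left
    (nhdsWithin_le_nhds (s := Set.Ioi (limsup a l)))) ?_
  filter_upwards [self_mem_nhdsWithin, nhdsWithin_le_nhds (Iio_mem_nhds ha.lt_top)] with b hab hb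
  exact hbound b hab hb

end Asymptotics

theorem limsup_vandSup_tensor_le_general
    {S : Type*} (τ : Set S) (r s : ℕ → ℕ)
    (F : ∀ n, Fin (r n) → S → ℂ) (G : ∀ n, Fin (s n) → S → ℂ)
    (eF eG eH : ℕ → ℕ)
    (heF : ∀ n, 0 < eF n) (heG : ∀ n, 0 < eG n)
    (hgrow : Tendsto
      (fun n => (eH n : ℝ) / (((r n : ℝ) * (s n : ℝ)) * Real.log ((r n : ℝ) * (s n : ℝ))))
      atTop atTop)
    (α β : ℝ) (hα : 0 ≤ α) (hβ : 0 ≤ β)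
    (hαlim : Tendsto (fun n => ((eF n : ℝ) * (s n : ℝ)) / (eH n : ℝ)) atTop (nhds α))
    (hβlim : Tendsto (fun n => ((eG n : ℝ) * (r n : ℝ)) / (eH n : ℝ)) atTop (nhds β))
    (hFfin : ∀ n, vandSup τ (F n) ≠ ⊤) (hGfin : ∀ n, vandSup τ (G n) ≠ ⊤)
    (A B : ℝ≥0∞)
    (hA : A = limsup (fun n => vandSup τ (F n) ^ (1 / (eF n : ℝ))) atTop)
    (hB : B = limsup (fun n => vandSup τ (G n) ^ (1 / (eG n : ℝ))) atTop)
    (hAtop : A ≠ ⊤) (hBtop : B ≠ ⊤) :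
    limsup (fun n =>
        vandSup τ (fun p : Fin (r n) × Fin (s n) => fun z => F n p.1 z * G n p.2 z)
          ^ (1 / (eH n : ℝ))) atTop
      ≤ A ^ α * B ^ β := by
  set c : ℕ → ℝ≥0∞ := fun n => (((r n * s n)! * 4 ^ (r n * s n) : ℕ) : ℝ≥0∞) ^ (1 / (eH n : ℝ))
  set X : ℕ → ℝ≥0∞ := fun n =>
    (vandSup τ (F n) ^ (1 / (eF n : ℝ))) ^ ((eF n : ℝ) * (s n : ℝ) / (eH n : ℝ))
  set Y : ℕ → ℝ≥0∞ := fun n =>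
    (vandSup τ (G n) ^ (1 / (eG n : ℝ))) ^ ((eG n : ℝ) * (r n : ℝ) / (eH n : ℝ))
  have hgrow' : Tendsto (fun n => (eH n : ℝ) / ((r n * s n : ℕ) * Real.log (r n * s n : ℕ)))
      atTop atTop := by simpa only [Nat.cast_mul] using hgrow
  have hstep : ∀ᶠ n in atTop, vandSup τ (mulFamily (F n) (G n)) ^ (1 / (eH n : ℝ)) ≤
      c n * X n * Y n := by
    filter_upwards [eventually_two_le_of_tendsto_div_mul_log hgrow'] with n hn
    have : NeZero (r n) := ⟨fun h => by simp [h] at hn⟩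
    have : NeZero (s n) := ⟨fun h => by simp [h] at hn⟩
    have hle := vandSup_mulFamily_le τ (hFfin n) (hGfin n)
    simp only [Fintype.card_prod, Fintype.card_fin] at hle
    have he : (0 : ℝ) ≤ 1 / (eH n : ℝ) := by positivity
    calc _ ≤ _ := ENNReal.rpow_le_rpow hle he
      _ = c n * X n * Y n := by
        rw [ENNReal.mul_rpow_of_nonneg _ _ he, ENNReal.mul_rpow_of_nonneg _ _ he,
          ENNReal.pow_rpow_one_div_eq _ _ (Nat.cast_ne_zero.2 (heF n).ne'),
          ENNReal.pow_rpow_one_div_eq _ _ (Nat.cast_ne_zero.2 (heG n).ne')]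
  have hc : limsup c atTop = 1 := (tendsto_factorial_mul_four_pow_rpow_one_div hgrow').limsup_eq
  have hX : limsup X atTop ≤ A ^ α :=
    hA ▸ ENNReal.limsup_rpow_le (fun n => by positivity) hαlim (hA ▸ hAtop)
  have hY : limsup Y atTop ≤ B ^ β :=
    hB ▸ ENNReal.limsup_rpow_le (fun n => by positivity) hβlim (hB ▸ hBtop)
  have hXtop := ne_top_of_le_ne_top (ENNReal.rpow_ne_top_of_nonneg hα hAtop) hX
  have hYtop := ne_top_of_le_ne_top (ENNReal.rpow_ne_top_of_nonneg hβ hBtop) hY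
  have hcX : limsup (c * X) atTop ≤ limsup X atTop := by
    simpa [hc] using
      ENNReal.limsup_mul_le' (f := atTop) (u := c) (v := X) (by simp [hc]) (by simp [hc])
  calc _ ≤ limsup (c * X * Y) atTop := limsup_le_limsup hstep
    _ ≤ limsup (c * X) atTop * limsup Y atTop :=
      ENNReal.limsup_mul_le' (Or.inr hYtop) (Or.inl (ne_top_of_le_ne_top hXtop hcX))
    _ ≤ A ^ α * B ^ β := mul_le_mul' (hcX.trans hX) hY

/-- Upper bound for the supremal transfinite diameter of a
tensor product of sequences of lists of functions:
`limsup t_{H_n}(τ)^{1/e^H_n} ≤ A^α · B^β`. -/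
theorem limsup_vandSup_tensor_le
    {S : Type*} (τ : Set S) (r s : ℕ → ℕ)
    (hr : ∀ n, 1 ≤ r n) (hs : ∀ n, 1 ≤ s n)
    (F : ∀ n, Fin (r n) → S → ℂ) (G : ∀ n, Fin (s n) → S → ℂ)
    (eF eG eH : ℕ → ℕ)
    (heF : ∀ n, 0 < eF n) (heG : ∀ n, 0 < eG n) (heH : ∀ n, 0 < eH n)
    (hgrow : Tendsto
      (fun n => (eH n : ℝ) / (((r n : ℝ) * (s n : ℝ)) * Real.log ((r n : ℝ) * (s n : ℝ))))
      atTop atTop)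
    (α β : ℝ) (hα : 0 ≤ α) (hβ : 0 ≤ β)
    (hαlim : Tendsto (fun n => ((eF n : ℝ) * (s n : ℝ)) / (eH n : ℝ)) atTop (nhds α))
    (hβlim : Tendsto (fun n => ((eG n : ℝ) * (r n : ℝ)) / (eH n : ℝ)) atTop (nhds β))
    (hFfin : ∀ n, vandSup τ (F n) ≠ ⊤) (hGfin : ∀ n, vandSup τ (G n) ≠ ⊤)
    (A B : ℝ≥0∞)
    (hA : A = limsup (fun n => vandSup τ (F n) ^ (1 / (eF n : ℝ))) atTop)
    (hB : B = limsup (fun n => vandSup τ (G n) ^ (1 / (eG n : ℝ))) atTop)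
    (hA0 : 0 < A) (hAtop : A ≠ ⊤) (hB0 : 0 < B) (hBtop : B ≠ ⊤) :
    limsup (fun n =>
        vandSup τ (fun p : Fin (r n) × Fin (s n) => fun z => F n p.1 z * G n p.2 z)
          ^ (1 / (eH n : ℝ))) atTop
      ≤ A ^ α * B ^ β :=
  limsup_vandSup_tensor_le_general τ r s F G eF eG eH heF heG hgrow α β hα hβ hαlim hβlim hFfin
    hGfin A B hA hB hAtop hBtop
end

section
/- Let d ≥ 1, let τ ⊆ ℂ^d be a bounded set, and for each n ≥ 1 let F_n be a list of r_n ≥ 1 polynomial functions ℂ^d → ℂ. Let G = (g_1, …, g_s) be a fixed finite list of polynomial functions ℂ^d → ℂ, and let H_n be the list of the r_n · s products f · g_j of a function f of F_n with a function g_j of G. Let e^F_n and e^H_n be positive integers such that e^H_n / (r_n s · log(r_n s)) → ∞ and e^F_n · s / e^H_n → α ≥ 0 as n → ∞. Assume A = limsup_n t_{F_n}(τ)^{1/e^F_n} is finite and strictly positive. Then limsup_n t_{H_n}(τ)^{1/e^H_n} ≤ A^α. -/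
/-!
Expand the determinant of the matrix `(f_i(z_p) g_j(z_p))` multilinearly in its rows, splitting
each row along the `s` column blocks `j`: this gives `s^{rs}` terms. A term vanishes unless every
block receives exactly `r` rows, and then it is, up to sign, block diagonal with blocks
`diag(g_j(z_p)) · (f_i(z_p))`. With `|g_j| ≤ G` on `τ` this gives `t_H(τ) ≤ (sG)^{rs} t_F(τ)^s`.
After taking `e^H`-th roots, `(sG)^{rs/e^H} → 1` because `e^H` outgrows `rs · log(rs)`, while
`t_F^{s/e^H} = (t_F^{1/e^F})^{e^F s/e^H}` is eventually at most `B^α` for every `B > A`.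
-/

open Filter
open scoped ENNReal

open Topology
open scoped NNReal

namespace Matrix

def restrictRowBlocks {R m n o : Type*} [Zero R] [DecidableEq o] (φ : n → o)
    (M : Matrix n (m × o) R) : Matrix n (m × o) R :=
  of fun p q => if φ p = q.2 then M p q else 0

variable {R m o : Type*} [CommRing R] [Fintype m] [DecidableEq m] [Fintype o] [DecidableEq o]

theorem det_eq_sum_det_restrictRowBlocks (M : Matrix (m × o) (m × o) R) :
    M.det = ∑ φ : m × o → o, (M.restrictRowBlocks φ).det := by
  have hrows : M = fun p => ∑ k, fun q => if k = q.2 then M p q else 0 := by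
    ext p q
    simp
  conv_lhs => rw [hrows]
  exact (detRowAlternating : (m × o → R) [⋀^(m × o)]→ₗ[R] R).map_sum _

theorem det_restrictRowBlocks_eq_zero {M : Matrix (m × o) (m × o) R} {φ : m × o → o}
    (hφ : ∀ σ : Equiv.Perm (m × o), ∃ q, φ (σ q) ≠ q.2) :
    (M.restrictRowBlocks φ).det = 0 := by
  rw [det_apply]
  refine Finset.sum_eq_zero fun σ _ => ?_
  obtain ⟨q, hq⟩ := hφ σ
  rw [Finset.prod_eq_zero (Finset.mem_univ q) (by simp [restrictRowBlocks, hq]), smul_zero]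

theorem det_restrictRowBlocks_eq_sign_smul_prod {M : Matrix (m × o) (m × o) R} {φ : m × o → o}
    {σ : Equiv.Perm (m × o)} (hσ : ∀ q, φ (σ q) = q.2) :
    (M.restrictRowBlocks φ).det =
      Equiv.Perm.sign σ • ∏ k, (of fun i i' => M (σ (i, k)) (i', k)).det := by
  have hblock : (M.restrictRowBlocks φ).submatrix σ id =
      blockDiagonal fun k => of fun i i' => M (σ (i, k)) (i', k) := by
    ext ⟨i, k⟩ ⟨i', k'⟩
    by_cases hk : k = k' <;> simp [restrictRowBlocks, blockDiagonal_apply, hσ, hk]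
  rw [Units.smul_def, zsmul_eq_mul, ← det_blockDiagonal, ← hblock, det_permute, ← mul_assoc,
    ← Int.cast_mul, ← Units.val_mul, Int.units_mul_self, Units.val_one, Int.cast_one, one_mul]

end Matrix

open Matrix Fintype

section Tensor

variable {S ι κ : Type*} [Fintype ι] [DecidableEq ι] [Fintype κ] [DecidableEq κ]
  {τ : Set S} (f : ι → S → ℂ) {g : κ → S → ℂ} {G : ℝ≥0}

theorem nnnorm_det_le_vandSup {z : ι → S} (hz : ∀ i, z i ∈ τ) :
    (‖(of fun i j => f j (z i)).det‖₊ : ℝ≥0∞) ≤ vandSup τ f :=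
  le_iSup₂_of_le z hz le_rfl

theorem nnnorm_det_restrictRowBlocks_tensor_le (hG : ∀ k, ∀ x ∈ τ, ‖g k x‖₊ ≤ G)
    {z : ι × κ → S} (hz : ∀ p, z p ∈ τ) (φ : ι × κ → κ) :
    (‖((of fun p q => f q.1 (z p) * g q.2 (z p)).restrictRowBlocks φ).det‖₊ : ℝ≥0∞) ≤
      ((G : ℝ≥0∞) ^ card ι * vandSup τ f) ^ card κ := by
  by_cases hφ : ∀ σ : Equiv.Perm (ι × κ), ∃ q, φ (σ q) ≠ q.2
  · simp [det_restrictRowBlocks_eq_zero hφ]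
  push Not at hφ
  obtain ⟨σ, hσ⟩ := hφ
  have hblock : ∀ k, (‖(of fun i i' => f i' (z (σ (i, k))) * g k (z (σ (i, k)))).det‖₊ : ℝ≥0∞) ≤
      (G : ℝ≥0∞) ^ card ι * vandSup τ f := by
    intro k
    have hcol := det_mul_column (fun i => g k (z (σ (i, k)))) (of fun i i' => f i' (z (σ (i, k))))
    simp only [of_apply] at hcol
    simp_rw [mul_comm (f _ _), hcol, nnnorm_mul, nnnorm_prod, ENNReal.coe_mul,
      ENNReal.ofNNReal_finsetProd]
    gcongr
    · exact (Finset.prod_le_prod' fun i _ => ENNReal.coe_le_coe.2 (hG k _ (hz _))).trans_eq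
        (by simp)
    · exact nnnorm_det_le_vandSup f fun i => hz _
  rw [det_restrictRowBlocks_eq_sign_smul_prod hσ, nnnorm_units_zsmul, nnnorm_prod,
    ENNReal.ofNNReal_finsetProd]
  simp only [of_apply]
  exact (Finset.prod_le_prod' fun k _ => hblock k).trans_eq (by simp)

theorem nnnorm_det_tensor_le (hG : ∀ k, ∀ x ∈ τ, ‖g k x‖₊ ≤ G) {z : ι × κ → S}
    (hz : ∀ p, z p ∈ τ) :
    (‖(of fun p q => f q.1 (z p) * g q.2 (z p)).det‖₊ : ℝ≥0∞) ≤
      ((card κ : ℝ≥0∞) * G) ^ (card ι * card κ) * vandSup τ f ^ card κ := by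
  rw [det_eq_sum_det_restrictRowBlocks]
  calc (‖∑ φ : ι × κ → κ, ((of fun p q => f q.1 (z p) * g q.2 (z p)).restrictRowBlocks φ).det‖₊
        : ℝ≥0∞)
      ≤ ∑ φ : ι × κ → κ,
          (‖((of fun p q => f q.1 (z p) * g q.2 (z p)).restrictRowBlocks φ).det‖₊ : ℝ≥0∞) := by
        exact_mod_cast nnnorm_sum_le _ _
    _ ≤ ∑ _φ : ι × κ → κ, ((G : ℝ≥0∞) ^ card ι * vandSup τ f) ^ card κ :=
        Finset.sum_le_sum fun φ _ => nnnorm_det_restrictRowBlocks_tensor_le f hG hz φ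
    _ = ((card κ : ℝ≥0∞) * G) ^ (card ι * card κ) * vandSup τ f ^ card κ := by
        simp only [Finset.sum_const, Finset.card_univ, card_fun, card_prod, nsmul_eq_mul]
        push_cast
        ring

theorem vandSup_tensor_le (hG : ∀ k, ∀ x ∈ τ, ‖g k x‖₊ ≤ G) :
    vandSup τ (fun (p : ι × κ) x => f p.1 x * g p.2 x) ≤
      ((card κ : ℝ≥0∞) * G) ^ (card ι * card κ) * vandSup τ f ^ card κ :=
  iSup₂_le fun _ hz => nnnorm_det_tensor_le f hG hz

end Tensor

theorem Bornology.IsBounded.exists_pos_nnnorm_le_of_continuous {X E κ : Type*}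
    [PseudoMetricSpace X] [ProperSpace X] [SeminormedAddCommGroup E] [Fintype κ] {τ : Set X}
    (hτ : Bornology.IsBounded τ) {g : κ → X → E} (hg : ∀ k, Continuous (g k)) :
    ∃ G : ℝ≥0, 0 < G ∧ ∀ k, ∀ x ∈ τ, ‖g k x‖₊ ≤ G := by
  have hcont : Continuous fun x k => g k x := continuous_pi hg
  obtain ⟨R, hR0, hR⟩ :=
    (hτ.isCompact_closure.image hcont).isBounded.exists_pos_norm_le
  refine ⟨⟨R, hR0.le⟩, hR0, fun k x hx => ?_⟩
  exact (norm_le_pi_norm (fun k => g k x) k).trans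
    (hR _ (Set.mem_image_of_mem _ (subset_closure hx)))

-- False for real-valued `m` tending to `1`: integrality is what forces `m n ≥ 2` eventually.
theorem tendsto_div_of_tendsto_div_mul_log {m : ℕ → ℕ} {e : ℕ → ℝ}
    (h : Tendsto (fun n => e n / (m n * Real.log (m n))) atTop atTop) :
    Tendsto (fun n => (m n : ℝ) / e n) atTop (𝓝 0) := by
  have hlog : Tendsto (fun n => m n * Real.log (m n) / e n / Real.log 2) atTop (𝓝 0) := by
    simpa using (h.inv_tendsto_atTop.congr fun n => inv_div _ _).div_const (Real.log 2)
  have hbound : ∀ᶠ n in atTop,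
      0 < e n ∧ (m n : ℝ) / e n ≤ m n * Real.log (m n) / e n / Real.log 2 := by
    filter_upwards [h.eventually_gt_atTop 0] with n hn
    have hm : 2 ≤ m n := by
      by_contra! hm
      interval_cases m n <;> simp at hn
    have hlog2 : Real.log 2 ≤ Real.log (m n) := Real.log_le_log two_pos (by exact_mod_cast hm)
    have he : 0 < e n := (div_pos_iff_of_pos_right
      (mul_pos (by positivity) ((Real.log_pos one_lt_two).trans_le hlog2))).1 hn
    refine ⟨he, ?_⟩
    rw [div_div, le_div_iff₀ (by positivity), div_mul_eq_mul_div, mul_div_assoc,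
      mul_div_cancel_left₀ _ he.ne']
    gcongr
  exact squeeze_zero' (hbound.mono fun n hn => by have := hn.1; positivity)
    (hbound.mono fun n hn => hn.2) hlog

namespace ENNReal

theorem tendsto_rpow_of_tendsto {ι : Type*} {l : Filter ι} {b : ℝ≥0∞} (hb0 : b ≠ 0)
    (hbtop : b ≠ ⊤) {u : ι → ℝ} {β : ℝ} (hu : Tendsto u l (𝓝 β)) :
    Tendsto (fun n => b ^ u n) l (𝓝 (b ^ β)) := by
  have hb : 0 < b.toReal := ENNReal.toReal_pos hb0 hbtop
  rw [← ENNReal.ofReal_toReal hbtop]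
  simp_rw [ENNReal.ofReal_rpow_of_pos hb]
  exact ENNReal.tendsto_ofReal (((Real.continuous_const_rpow hb.ne').tendsto β).comp hu)

theorem rpow_one_div_le_of_le_pow_mul_pow {h t c b : ℝ≥0∞} {k s e f : ℕ} (hf : 0 < f)
    (hht : h ≤ c ^ k * t ^ s) (htb : t ^ (1 / (f : ℝ)) ≤ b) :
    h ^ (1 / (e : ℝ)) ≤ c ^ ((k : ℝ) / e) * b ^ ((f * s : ℝ) / e) :=
  calc h ^ (1 / (e : ℝ)) ≤ (c ^ k * t ^ s) ^ (1 / (e : ℝ)) := by gcongr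
    _ = c ^ ((k : ℝ) / e) * (t ^ (1 / (f : ℝ))) ^ ((f * s : ℝ) / e) := by
      rw [mul_rpow_of_nonneg _ _ (by positivity), ← rpow_natCast, ← rpow_natCast, ← rpow_mul,
        ← rpow_mul, ← rpow_mul]
      congr 2 <;> field_simp
    _ ≤ c ^ ((k : ℝ) / e) * b ^ ((f * s : ℝ) / e) := by gcongr

theorem limsup_rpow_le_of_le_pow_mul_pow {ι : Type*} {l : Filter ι} [l.NeBot]
    {H T : ι → ℝ≥0∞} {C : ℝ≥0∞} {k eF eH : ι → ℕ} {s : ℕ} {α : ℝ}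
    (hC0 : C ≠ 0) (hCtop : C ≠ ⊤) (heF : ∀ n, 0 < eF n) (hHT : ∀ n, H n ≤ C ^ k n * T n ^ s)
    (hk : Tendsto (fun n => (k n : ℝ) / eH n) l (𝓝 0))
    (hα : Tendsto (fun n => (eF n * s : ℝ) / eH n) l (𝓝 α))
    (hA : limsup (fun n => T n ^ (1 / (eF n : ℝ))) l ≠ ⊤) :
    limsup (fun n => H n ^ (1 / (eH n : ℝ))) l ≤
      limsup (fun n => T n ^ (1 / (eF n : ℝ))) l ^ α := by
  set A := limsup (fun n => T n ^ (1 / (eF n : ℝ))) l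
  have hB : ∀ B, A < B → B ≠ ⊤ → limsup (fun n => H n ^ (1 / (eH n : ℝ))) l ≤ B ^ α := by
    intro B hAB hBtop
    have hlim : Tendsto (fun n => C ^ ((k n : ℝ) / eH n) * B ^ ((eF n * s : ℝ) / eH n)) l
        (𝓝 (B ^ α)) := by
      simpa using ENNReal.Tendsto.mul (tendsto_rpow_of_tendsto hC0 hCtop hk) (Or.inl (by simp))
        (tendsto_rpow_of_tendsto (pos_of_gt hAB).ne' hBtop hα) (Or.inr (by simp))
    refine (limsup_le_limsup ?_).trans_eq hlim.limsup_eq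
    filter_upwards [eventually_lt_of_limsup_lt hAB] with n hn
    exact rpow_one_div_le_of_le_pow_mul_pow (heF n) (hHT n) hn.le
  have : (𝓝[>] A).NeBot := nhdsGT_neBot_of_exists_gt ⟨⊤, hA.lt_top⟩
  have hcont : Tendsto (· ^ α) (𝓝[>] A) (𝓝 (A ^ α)) :=
    (continuous_rpow_const.tendsto A).mono_left nhdsWithin_le_nhds
  refine ge_of_tendsto hcont ?_
  filter_upwards [self_mem_nhdsWithin, mem_nhdsWithin_of_mem_nhds (Iio_mem_nhds hA.lt_top)]
    with B hAB hBtop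
  exact hB B hAB hBtop.ne

end ENNReal

theorem limsup_vandSup_tensor_stationary_le_general
    (d : ℕ) (τ : Set (Fin d → ℂ)) (hτ : Bornology.IsBounded τ)
    (r : ℕ → ℕ)
    (P : ∀ n, Fin (r n) → MvPolynomial (Fin d) ℂ)
    (s : ℕ) (g : Fin s → MvPolynomial (Fin d) ℂ)
    (eF eH : ℕ → ℕ) (heF : ∀ n, 0 < eF n)
    (hgrow : Tendsto
      (fun n => (eH n : ℝ) / (((r n : ℝ) * (s : ℝ)) * Real.log ((r n : ℝ) * (s : ℝ))))
      atTop atTop)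
    (α : ℝ)
    (hαlim : Tendsto (fun n => ((eF n : ℝ) * (s : ℝ)) / (eH n : ℝ)) atTop (nhds α))
    (A : ℝ≥0∞)
    (hA : A = limsup (fun n =>
      vandSup τ (fun i (x : Fin d → ℂ) => MvPolynomial.eval x (P n i))
        ^ (1 / (eF n : ℝ))) atTop)
    (hAtop : A ≠ ⊤) :
    limsup (fun n =>
        vandSup τ (fun p : Fin (r n) × Fin s => fun x : Fin d → ℂ =>
            MvPolynomial.eval x (P n p.1) * MvPolynomial.eval x (g p.2))
          ^ (1 / (eH n : ℝ))) atTop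
      ≤ A ^ α := by
  obtain ⟨G, hG0, hG⟩ := hτ.exists_pos_nnnorm_le_of_continuous
    (g := fun j x => MvPolynomial.eval x (g j)) fun j => MvPolynomial.continuous_eval _
  have hs : s ≠ 0 := by
    rintro rfl
    simp only [Nat.cast_zero, mul_zero, zero_mul, div_zero] at hgrow
    exact not_tendsto_const_atTop _ _ hgrow
  have hrs : Tendsto (fun n => ((r n * s : ℕ) : ℝ) / eH n) atTop (𝓝 0) :=
    tendsto_div_of_tendsto_div_mul_log (by simpa using hgrow)
  subst hA
  refine ENNReal.limsup_rpow_le_of_le_pow_mul_pow (C := s * G) (k := fun n => r n * s)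
    (mul_ne_zero (by simpa) (by simpa using hG0.ne')) (ENNReal.mul_ne_top (by simp) (by simp))
    heF (fun n => ?_) hrs hαlim hAtop
  simpa using vandSup_tensor_le (fun i x => MvPolynomial.eval x (P n i)) hG

/-- Tensoring a sequence of lists of polynomial functions on a
bounded set `τ ⊆ ℂ^d` with a fixed finite (stationary) list of polynomial functions:
`limsup t_{H_n}(τ)^{1/e^H_n} ≤ A^α`. -/
theorem limsup_vandSup_tensor_stationary_le
    (d : ℕ) (hd : 1 ≤ d) (τ : Set (Fin d → ℂ)) (hτ : Bornology.IsBounded τ)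
    (r : ℕ → ℕ) (hr : ∀ n, 1 ≤ r n)
    (P : ∀ n, Fin (r n) → MvPolynomial (Fin d) ℂ)
    (s : ℕ) (g : Fin s → MvPolynomial (Fin d) ℂ)
    (eF eH : ℕ → ℕ) (heF : ∀ n, 0 < eF n) (heH : ∀ n, 0 < eH n)
    (hgrow : Tendsto
      (fun n => (eH n : ℝ) / (((r n : ℝ) * (s : ℝ)) * Real.log ((r n : ℝ) * (s : ℝ))))
      atTop atTop)
    (α : ℝ) (hα : 0 ≤ α)
    (hαlim : Tendsto (fun n => ((eF n : ℝ) * (s : ℝ)) / (eH n : ℝ)) atTop (nhds α))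
    (A : ℝ≥0∞)
    (hA : A = limsup (fun n =>
      vandSup τ (fun i (x : Fin d → ℂ) => MvPolynomial.eval x (P n i))
        ^ (1 / (eF n : ℝ))) atTop)
    (hA0 : 0 < A) (hAtop : A ≠ ⊤) :
    limsup (fun n =>
        vandSup τ (fun p : Fin (r n) × Fin s => fun x : Fin d → ℂ =>
            MvPolynomial.eval x (P n p.1) * MvPolynomial.eval x (g p.2))
          ^ (1 / (eH n : ℝ))) atTop
      ≤ A ^ α :=
  limsup_vandSup_tensor_stationary_le_general d τ hτ r P s g eF eH heF hgrow α hαlim A hA hAtop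
end

section
/- In the polynomial ring ℤ[X, Y] in two variables over ℤ, the family of polynomials (XY)^i (X+Y)^j X^k, indexed by pairs (i, j) of non-negative integers and k ∈ {0, 1}, is a ℤ-module basis of ℤ[X, Y]. Equivalently, the natural ℤ-linear map ℤ[XY, X+Y] ⊗_ℤ (ℤ ⊕ ℤX) → ℤ[X, Y] induced by multiplication is an isomorphism of ℤ-modules. -/
/-!
Over the symmetric polynomials `ℤ[X + Y, XY]`, the ring `ℤ[X, Y]` is free with basis `1, X`:
it is spanned by `1, X` because `X² = (X + Y) X - XY`, and if `P + Q X = 0` with `P, Q` symmetric,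
then swapping `X` and `Y` gives `Q (X - Y) = 0`, so `Q = P = 0`. By the fundamental theorem of
symmetric polynomials the monomials `(XY)^i (X + Y)^j` form a `ℤ`-basis of `ℤ[X + Y, XY]`, and
the tower of the two bases is the family of the theorem.
-/

open MvPolynomial

theorem eq_zero_and_eq_zero_of_add_mul_eq_zero {A : Type*} [CommRing A] [IsDomain A]
    (σ : A →+* A) {p q x : A} (hp : σ p = p) (hq : σ q = q) (hx : σ x ≠ x)
    (h : p + q * x = 0) : p = 0 ∧ q = 0 := by
  have hσ : p + q * σ x = 0 := by simpa [hp, hq] using congrArg σ h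
  have hq0 : q = 0 := by
    have : q * (x - σ x) = 0 := by linear_combination h - hσ
    exact (mul_eq_zero.mp this).resolve_right (sub_ne_zero.mpr hx.symm)
  subst hq0
  simpa using h

namespace MvPolynomial

section CommSemiring

variable (R : Type*) [CommSemiring R]

theorem esymm_fin_two_one : esymm (Fin 2) R 1 = X 0 + X 1 := by
  simp [esymm_one, Fin.sum_univ_two]

theorem esymm_fin_two_two : esymm (Fin 2) R 2 = X 0 * X 1 := by
  have : Finset.powersetCard 2 (Finset.univ : Finset (Fin 2)) = {Finset.univ} := by decide
  simp [esymm, this, Fin.prod_univ_two]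

variable {R}

theorem isSymmetric_X_zero_add_X_one : (X 0 + X 1 : MvPolynomial (Fin 2) R).IsSymmetric := by
  simpa only [esymm_fin_two_one] using esymm_isSymmetric (Fin 2) R 1

theorem isSymmetric_X_zero_mul_X_one : (X 0 * X 1 : MvPolynomial (Fin 2) R).IsSymmetric := by
  simpa only [esymm_fin_two_two] using esymm_isSymmetric (Fin 2) R 2

end CommSemiring

section esymmBasis

variable (σ R : Type*) [CommRing R] [Fintype σ] {n : ℕ}

noncomputable def esymmBasis (hn : Fintype.card σ = n) :
    Module.Basis (Fin n →₀ ℕ) R (symmetricSubalgebra σ R) :=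
  (basisMonomials (Fin n) R).map (esymmAlgEquiv σ R hn).toLinearEquiv

theorem coe_esymmBasis_apply (hn : Fintype.card σ = n) (s : Fin n →₀ ℕ) :
    (esymmBasis σ R hn s : MvPolynomial σ R) = ∏ i : Fin n, esymm σ R ((i : ℕ) + 1) ^ s i := by
  rw [esymmBasis, Module.Basis.map_apply, coe_basisMonomials, AlgEquiv.toLinearEquiv_apply,
    esymmAlgEquiv_apply, esymmAlgHom_apply, aeval_monomial, map_one, one_mul]
  exact Finsupp.prod_fintype _ _ fun _ => pow_zero _

end esymmBasis

section FinTwo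

variable {R : Type*} [CommRing R]

theorem linearIndependent_one_X_zero [IsDomain R] :
    LinearIndependent (symmetricSubalgebra (Fin 2) R) ![(1 : MvPolynomial (Fin 2) R), X 0] := by
  rw [LinearIndependent.pair_iff]
  intro s t hst
  simp only [Subalgebra.smul_def, smul_eq_mul, mul_one] at hst
  have hswap : rename (Equiv.swap (0 : Fin 2) 1) (X 0 : MvPolynomial (Fin 2) R) ≠ X 0 := by
    simp [rename_X, X_injective.ne_iff]
  obtain ⟨hs, ht⟩ := eq_zero_and_eq_zero_of_add_mul_eq_zero
    (rename (Equiv.swap (0 : Fin 2) 1)).toRingHom (s.2 _) (t.2 _) hswap hst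
  exact ⟨Subtype.ext hs, Subtype.ext ht⟩

theorem span_one_X_zero :
    Submodule.span (symmetricSubalgebra (Fin 2) R)
      (Set.range ![(1 : MvPolynomial (Fin 2) R), X 0]) = ⊤ := by
  set M := Submodule.span (symmetricSubalgebra (Fin 2) R)
    (Set.range ![(1 : MvPolynomial (Fin 2) R), X 0])
  let e₁ : symmetricSubalgebra (Fin 2) R := ⟨X 0 + X 1, isSymmetric_X_zero_add_X_one⟩
  let e₂ : symmetricSubalgebra (Fin 2) R := ⟨X 0 * X 1, isSymmetric_X_zero_mul_X_one⟩
  have one_mem : (1 : MvPolynomial (Fin 2) R) ∈ M := Submodule.subset_span ⟨0, rfl⟩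
  have X_zero_mem : (X 0 : MvPolynomial (Fin 2) R) ∈ M := Submodule.subset_span ⟨1, rfl⟩
  have X_zero_mul_mem : M ≤ M.comap (LinearMap.mulLeft _ (X 0)) := by
    refine Submodule.span_le.mpr (Set.range_subset_iff.mpr fun k => ?_)
    fin_cases k
    · simpa using X_zero_mem
    · have : X 0 * X 0 = e₁ • X 0 - e₂ • (1 : MvPolynomial (Fin 2) R) := by
        simp only [Subalgebra.smul_def, e₁, e₂]; ring
      simpa [this] using M.sub_mem (M.smul_mem e₁ X_zero_mem) (M.smul_mem e₂ one_mem)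
  have X_mul_mem (i : Fin 2) (f : MvPolynomial (Fin 2) R) (hf : f ∈ M) : X i * f ∈ M := by
    fin_cases i
    · exact X_zero_mul_mem hf
    · have : X 1 * f = e₁ • f - X 0 * f := by simp only [Subalgebra.smul_def, e₁]; ring
      simpa [this] using M.sub_mem (M.smul_mem e₁ hf) (X_zero_mul_mem hf)
  refine Submodule.eq_top_iff'.mpr fun f => ?_
  induction f using MvPolynomial.induction_on with
  | C a => simpa [smul_eq_C_mul] using Submodule.smul_of_tower_mem M a one_mem
  | add f g hf hg => exact M.add_mem hf hg
  | mul_X f i hf => exact mul_comm (X i) f ▸ X_mul_mem i f hf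

variable (R) in
noncomputable def basisOneXZero [IsDomain R] :
    Module.Basis (Fin 2) (symmetricSubalgebra (Fin 2) R) (MvPolynomial (Fin 2) R) :=
  .mk linearIndependent_one_X_zero span_one_X_zero.ge

theorem basisOneXZero_apply [IsDomain R] (k : Fin 2) : basisOneXZero R k = X 0 ^ (k : ℕ) := by
  fin_cases k <;> simp [basisOneXZero]

variable (R) in
noncomputable def basisEsymmMulXZeroPow [IsDomain R] :
    Module.Basis ((Fin 2 →₀ ℕ) × Fin 2) R (MvPolynomial (Fin 2) R) :=
  (esymmBasis (Fin 2) R (Fintype.card_fin 2)).smulTower (basisOneXZero R)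

theorem basisEsymmMulXZeroPow_apply [IsDomain R] (s : Fin 2 →₀ ℕ) (k : Fin 2) :
    basisEsymmMulXZeroPow R (s, k) = (X 0 * X 1) ^ s 1 * (X 0 + X 1) ^ s 0 * X 0 ^ (k : ℕ) := by
  rw [basisEsymmMulXZeroPow, Module.Basis.smulTower_apply, Subalgebra.smul_def, smul_eq_mul,
    coe_esymmBasis_apply, basisOneXZero_apply, Fin.prod_univ_two]
  simp only [Fin.val_zero, Fin.val_one, zero_add, Nat.reduceAdd, esymm_fin_two_one,
    esymm_fin_two_two]
  ring

end FinTwo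

end MvPolynomial

/-- In `ℤ[X, Y]`, the family `(XY)^i (X+Y)^j X^k` for `i, j ≥ 0`
and `k ∈ {0, 1}` is a `ℤ`-module basis: it is linearly independent over `ℤ` and
spans `ℤ[X, Y]` as a `ℤ`-module. -/
theorem basis_xy_xplusy :
    LinearIndependent ℤ
      (fun p : ℕ × ℕ × Fin 2 =>
        (X 0 * X 1 : MvPolynomial (Fin 2) ℤ) ^ p.1
          * (X 0 + X 1) ^ p.2.1 * (X 0) ^ (p.2.2 : ℕ)) ∧
    Submodule.span ℤ
      (Set.range fun p : ℕ × ℕ × Fin 2 =>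
        (X 0 * X 1 : MvPolynomial (Fin 2) ℤ) ^ p.1
          * (X 0 + X 1) ^ p.2.1 * (X 0) ^ (p.2.2 : ℕ)) = ⊤ := by
  let exponents : ℕ × ℕ ≃ (Fin 2 →₀ ℕ) :=
    (Equiv.prodComm ℕ ℕ).trans ((finTwoArrowEquiv ℕ).symm.trans Finsupp.equivFunOnFinite.symm)
  let b := (basisEsymmMulXZeroPow ℤ).reindex
    ((Equiv.prodAssoc ℕ ℕ (Fin 2)).symm.trans (exponents.prodCongr (Equiv.refl _))).symm
  have hb : ⇑b = fun p : ℕ × ℕ × Fin 2 =>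
      (X 0 * X 1 : MvPolynomial (Fin 2) ℤ) ^ p.1 * (X 0 + X 1) ^ p.2.1 * (X 0) ^ (p.2.2 : ℕ) := by
    funext ⟨i, j, k⟩
    simp [b, exponents, basisEsymmMulXZeroPow_apply]
  exact hb ▸ ⟨b.linearIndependent, b.span_eq⟩
end

section
/- Let τ ⊆ ℂ² be a bounded set, and let φ_x, φ_y : ℂ² → ℂ² be the maps φ_x(x, y) = (xy, x) and φ_y(x, y) = (xy, y). Then Sup^rec(τ) ≤ ( Sup^hom(φ_x(τ)) )^{1/3} · ( Sup^hom(φ_y(τ)) )^{1/3}. -/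
open Filter
open scoped ENNReal

/-- The rectangular supremal transfinite diameter of `τ ⊆ ℂ²`:
`limsup_n t_{R_n}(τ)^{1/(n²(n−1))}` where `R_n` is the list of the `n²` monomials
`(x, y) ↦ x^a y^b` with `0 ≤ a, b ≤ n − 1`. -/
noncomputable def supRec (τ : Set (ℂ × ℂ)) : ℝ≥0∞ :=
  limsup (fun n : ℕ =>
    vandSup τ (fun p : Fin n × Fin n => fun z : ℂ × ℂ =>
        z.1 ^ (p.1 : ℕ) * z.2 ^ (p.2 : ℕ))
      ^ (1 / ((n : ℝ) ^ 2 * ((n : ℝ) - 1)))) atTop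

/-- The homogeneous supremal transfinite diameter of `τ ⊆ ℂ²`:
`limsup_n t_{H_n}(τ)^{3/(n(n−1)(n+1))}` where `H_n` is the list of the `n(n+1)/2`
monomials `(x, y) ↦ x^a y^b` with `a + b ≤ n − 1`. -/
noncomputable def supHom (τ : Set (ℂ × ℂ)) : ℝ≥0∞ :=
  limsup (fun n : ℕ =>
    vandSup τ (fun p : {p : Fin n × Fin n // (p.1 : ℕ) + (p.2 : ℕ) < n} =>
        fun z : ℂ × ℂ => z.1 ^ (p.1.1 : ℕ) * z.2 ^ (p.1.2 : ℕ))
      ^ (3 / ((n : ℝ) * ((n : ℝ) - 1) * ((n : ℝ) + 1)))) atTop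

/-!
Split the exponent square `0 ≤ a, b ≤ n - 1` into the triangles `b ≤ a` and `a < b`. On the first,
`x^a y^b = (xy)^b x^(a-b)` is a monomial of degree `< n` evaluated at `φ_x(x, y)`; on the second,
`x^a y^b = y (xy)^a y^(b-a-1)` is `y` times a monomial of degree `< n - 1` evaluated at
`φ_y(x, y)`. Averaging the Laplace expansion along this splitting of the columns bounds the
rectangular Vandermonde determinant by `(n²)! (sup_τ |y|)^(n²)` times the two homogeneous
Vandermonde suprema. Now `1/(n²(n-1))` is the homogeneous normalisation `3/(n(n-1)(n+1))` times
`(n+1)/(3n)`, and the one of `n - 1` times `(n-2)/(3n)`; both factors tend to `1/3`, while the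
`n²(n-1)`-th root of the constant tends to `1`. Boundedness of `τ` keeps both homogeneous
diameters finite, so that the limsup of the product splits.
-/

open Set Bornology
open scoped NNReal Topology Nat

namespace Matrix

variable {α β : Type*} [Fintype α] [Fintype β] [DecidableEq α] [DecidableEq β]

theorem factorial_mul_factorial_mul_det_eq_sum_perm {R : Type*} [CommRing R]
    (M : Matrix (α ⊕ β) (α ⊕ β) R) :
    ((Fintype.card α)! * (Fintype.card β)! : ℕ) * M.det
      = ∑ π : Equiv.Perm (α ⊕ β), Equiv.Perm.sign π •
          ((of fun a a' : α => M (π (.inl a)) (.inl a')).det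
            * (of fun b b' : β => M (π (.inr b)) (.inr b')).det) := by
  -- Expanding both block determinants, each term of `det M` appears once for every
  -- `π * sumCongr σ ρ` representing it, i.e. `(card α)! * (card β)!` times.
  have expand (π : Equiv.Perm (α ⊕ β)) :
      Equiv.Perm.sign π • ((of fun a a' : α => M (π (.inl a)) (.inl a')).det
          * (of fun b b' : β => M (π (.inr b)) (.inr b')).det)
        = ∑ σ : Equiv.Perm α, ∑ ρ : Equiv.Perm β,
            (Equiv.Perm.sign (π * .sumCongr σ ρ) : R) * ∏ j, M ((π * .sumCongr σ ρ) j) j := by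
    rw [det_apply, det_apply, Finset.sum_mul_sum, Finset.smul_sum]
    refine Finset.sum_congr rfl fun σ _ => ?_
    rw [Finset.smul_sum]
    refine Finset.sum_congr rfl fun ρ _ => ?_
    rw [Fintype.prod_sum_type]
    simp only [Equiv.Perm.sign_mul, Equiv.Perm.sign_sumCongr, Units.smul_def, zsmul_eq_mul,
      of_apply, Units.val_mul, Int.cast_mul, Equiv.Perm.coe_mul, Function.comp_apply,
      Equiv.sumCongr_apply, Sum.map_inl, Sum.map_inr]
    ring
  have reindex (σ : Equiv.Perm α) (ρ : Equiv.Perm β) :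
      ∑ π : Equiv.Perm (α ⊕ β),
          (Equiv.Perm.sign (π * .sumCongr σ ρ) : R) * ∏ j, M ((π * .sumCongr σ ρ) j) j
        = M.det := by
    rw [det_apply]
    exact (Equiv.sum_comp (Equiv.mulRight (Equiv.sumCongr σ ρ))
      fun π => (Equiv.Perm.sign π : R) * ∏ j, M (π j) j).trans (by simp [Units.smul_def])
  calc ((Fintype.card α)! * (Fintype.card β)! : ℕ) * M.det
      = ∑ _σ : Equiv.Perm α, ∑ _ρ : Equiv.Perm β, M.det := by
        simp [Fintype.card_perm, nsmul_eq_mul, mul_assoc]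
    _ = ∑ σ : Equiv.Perm α, ∑ ρ : Equiv.Perm β, ∑ π : Equiv.Perm (α ⊕ β),
          (Equiv.Perm.sign (π * .sumCongr σ ρ) : R) * ∏ j, M ((π * .sumCongr σ ρ) j) j := by
        simp only [reindex]
    _ = _ := by
        simp_rw [expand]
        exact (Finset.sum_congr rfl fun _ _ => Finset.sum_comm).trans Finset.sum_comm

theorem nnnorm_det_le_sum_perm {𝕜 : Type*} [RCLike 𝕜] (M : Matrix (α ⊕ β) (α ⊕ β) 𝕜) :
    ‖M.det‖₊ ≤ ∑ π : Equiv.Perm (α ⊕ β),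
      ‖(of fun a a' : α => M (π (.inl a)) (.inl a')).det‖₊
        * ‖(of fun b b' : β => M (π (.inr b)) (.inr b')).det‖₊ := by
  set k : ℕ := (Fintype.card α)! * (Fintype.card β)!
  have hk : 1 ≤ (k : ℝ≥0) := by exact_mod_cast Nat.one_le_iff_ne_zero.2 (by positivity)
  calc ‖M.det‖₊ ≤ k * ‖M.det‖₊ := le_mul_of_one_le_left zero_le hk
    _ = ‖(k : 𝕜) * M.det‖₊ := by rw [nnnorm_mul, RCLike.nnnorm_natCast]
    _ ≤ _ := by
      rw [factorial_mul_factorial_mul_det_eq_sum_perm]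
      refine (nnnorm_sum_le _ _).trans (Finset.sum_le_sum fun π _ => ?_)
      rw [nnnorm_units_zsmul, nnnorm_mul]

end Matrix

section vandSup

variable {S ι : Type*} [Fintype ι] [DecidableEq ι] {τ : Set S}

theorem le_vandSup (m : ι → S → ℂ) {z : ι → S} (hz : ∀ i, z i ∈ τ) :
    (‖(Matrix.of fun i j : ι => m j (z i)).det‖₊ : ℝ≥0∞) ≤ vandSup τ m :=
  le_iSup₂_of_le z hz le_rfl

theorem vandSup_comp_equiv_le {κ : Type*} [Fintype κ] [DecidableEq κ] (e : ι ≃ κ)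
    (m : κ → S → ℂ) : vandSup τ (m ∘ e) ≤ vandSup τ m := by
  refine iSup₂_le fun z hz => ?_
  have : (Matrix.of fun i j : ι => m (e j) (z i))
      = (Matrix.of fun i j : κ => m j (z (e.symm i))).submatrix e e := by
    ext i j
    simp
  rw [Function.comp_def, this, Matrix.det_submatrix_equiv_self]
  exact le_vandSup m fun i => hz _

theorem vandSup_sum_le {α β : Type*} [Fintype α] [Fintype β] [DecidableEq α] [DecidableEq β]
    (m : α ⊕ β → S → ℂ) :
    vandSup τ m ≤ (Fintype.card α + Fintype.card β)!
      * vandSup τ (m ∘ .inl) * vandSup τ (m ∘ .inr) := by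
  refine iSup₂_le fun z hz => ?_
  calc (‖(Matrix.of fun i j => m j (z i)).det‖₊ : ℝ≥0∞)
      ≤ ∑ _π : Equiv.Perm (α ⊕ β), vandSup τ (m ∘ .inl) * vandSup τ (m ∘ .inr) := by
        refine (ENNReal.coe_le_coe.2 (Matrix.nnnorm_det_le_sum_perm _)).trans ?_
        push_cast
        exact Finset.sum_le_sum fun π _ =>
          mul_le_mul' (le_vandSup _ fun _ => hz _) (le_vandSup _ fun _ => hz _)
    _ = _ := by
        rw [Finset.sum_const, Finset.card_univ, Fintype.card_perm, Fintype.card_sum,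
          nsmul_eq_mul, mul_assoc]

theorem vandSup_le_mul_vandSup_image {S' ι' : Type*} [Fintype ι'] [DecidableEq ι']
    {m : ι → S → ℂ} {m' : ι' → S' → ℂ} {f : S → S'} {d : S → ℂ} {c : ℝ≥0} (g : ι ≃ ι')
    (hd : ∀ s ∈ τ, ‖d s‖₊ ≤ c) (hm : ∀ j, ∀ s ∈ τ, m j s = d s * m' (g j) (f s)) :
    vandSup τ m ≤ c ^ Fintype.card ι * vandSup (f '' τ) m' := by
  refine iSup₂_le fun z hz => ?_
  have : (Matrix.of fun i j : ι => m j (z i))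
      = Matrix.diagonal (fun i => d (z i))
        * (Matrix.of fun i j : ι' => m' j (f (z (g.symm i)))).submatrix g g := by
    ext i j
    simp [Matrix.diagonal_mul, hm j (z i) (hz i)]
  rw [this, Matrix.det_mul, nnnorm_mul, Matrix.det_diagonal, nnnorm_prod,
    Matrix.det_submatrix_equiv_self]
  push_cast
  gcongr
  · calc ∏ i, (‖d (z i)‖₊ : ℝ≥0∞) ≤ ∏ _i : ι, (c : ℝ≥0∞) :=
          Finset.prod_le_prod' fun i _ => by exact_mod_cast hd _ (hz i)
      _ = c ^ Fintype.card ι := by rw [Finset.prod_const, Finset.card_univ]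
  · exact le_vandSup m' fun i => Set.mem_image_of_mem f (hz _)

theorem vandSup_le_of_forall_nnnorm_le {m : ι → S → ℂ} {E : ℝ≥0}
    (hm : ∀ j, ∀ s ∈ τ, ‖m j s‖₊ ≤ E) :
    vandSup τ m ≤ (Fintype.card ι)! * E ^ Fintype.card ι := by
  refine iSup₂_le fun z hz => ?_
  have := Matrix.det_le (abv := NormedField.toAbsoluteValue ℂ)
    (A := Matrix.of fun i j : ι => m j (z i)) (x := (E : ℝ)) fun i j => hm j _ (hz i)
  rw [← ENNReal.coe_natCast, ← ENNReal.coe_pow, ← ENNReal.coe_mul, ENNReal.coe_le_coe,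
    ← NNReal.coe_le_coe]
  simpa [NormedField.toAbsoluteValue] using this

end vandSup

def rectMonomials (n : ℕ) (p : Fin n × Fin n) (z : ℂ × ℂ) : ℂ := z.1 ^ (p.1 : ℕ) * z.2 ^ (p.2 : ℕ)

abbrev HomIndex (n : ℕ) : Type := {p : Fin n × Fin n // (p.1 : ℕ) + (p.2 : ℕ) < n}

def homMonomials (n : ℕ) (p : HomIndex n) (z : ℂ × ℂ) : ℂ :=
  z.1 ^ (p.1.1 : ℕ) * z.2 ^ (p.1.2 : ℕ)

def lowerTriangleEquiv (n : ℕ) : {p : Fin n × Fin n // (p.2 : ℕ) ≤ p.1} ≃ HomIndex n where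
  toFun p := ⟨(p.1.2, ⟨p.1.1 - p.1.2, by omega⟩), by simp; omega⟩
  invFun q := ⟨(⟨q.1.1 + q.1.2, q.2⟩, q.1.1), by simp⟩
  left_inv p := by ext <;> simp; omega
  right_inv q := by ext <;> simp

def upperTriangleEquiv (n : ℕ) :
    {p : Fin (n + 1) × Fin (n + 1) // ¬ (p.2 : ℕ) ≤ p.1} ≃ HomIndex n where
  toFun p := ⟨(⟨p.1.1, by omega⟩, ⟨p.1.2 - p.1.1 - 1, by omega⟩), by simp; omega⟩
  invFun q := ⟨(⟨q.1.1, by omega⟩, ⟨q.1.1 + q.1.2 + 1, by omega⟩), by simp⟩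
  left_inv p := by ext <;> simp; omega
  right_inv q := by ext <;> simp; omega

theorem rectMonomials_of_le {n : ℕ} (p : {p : Fin n × Fin n // (p.2 : ℕ) ≤ p.1}) (z : ℂ × ℂ) :
    rectMonomials n p.1 z = homMonomials n (lowerTriangleEquiv n p) (z.1 * z.2, z.1) := by
  simp only [rectMonomials, homMonomials, lowerTriangleEquiv, Equiv.coe_fn_mk]
  rw [mul_pow, mul_right_comm, ← pow_add, Nat.add_sub_cancel' p.2]

theorem rectMonomials_of_not_le {n : ℕ} (p : {p : Fin (n + 1) × Fin (n + 1) // ¬ (p.2 : ℕ) ≤ p.1})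
    (z : ℂ × ℂ) :
    rectMonomials (n + 1) p.1 z
      = z.2 * homMonomials n (upperTriangleEquiv n p) (z.1 * z.2, z.2) := by
  simp only [rectMonomials, homMonomials, upperTriangleEquiv, Equiv.coe_fn_mk]
  obtain ⟨⟨a, b⟩, hab⟩ := p
  obtain ⟨k, hk⟩ : ∃ k, (b : ℕ) = a + k + 1 := ⟨b - a - 1, by simp at hab; omega⟩
  rw [show (b : ℕ) - a - 1 = k by omega, hk]
  ring

theorem vandSup_rectMonomials_succ_le {τ : Set (ℂ × ℂ)} {c : ℝ≥0} (hc : 1 ≤ c)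
    (hτ : ∀ z ∈ τ, ‖z.2‖₊ ≤ c) (n : ℕ) :
    vandSup τ (rectMonomials (n + 1))
      ≤ ((n + 1) ^ 2)! * c ^ (n + 1) ^ 2
        * vandSup ((fun z : ℂ × ℂ => (z.1 * z.2, z.1)) '' τ) (homMonomials (n + 1))
        * vandSup ((fun z : ℂ × ℂ => (z.1 * z.2, z.2)) '' τ) (homMonomials n) := by
  set E := Equiv.sumCompl fun p : Fin (n + 1) × Fin (n + 1) => (p.2 : ℕ) ≤ p.1
  have hcard : Fintype.card {p : Fin (n + 1) × Fin (n + 1) // (p.2 : ℕ) ≤ p.1}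
      + Fintype.card {p : Fin (n + 1) × Fin (n + 1) // ¬ (p.2 : ℕ) ≤ p.1} = (n + 1) ^ 2 := by
    rw [← Fintype.card_sum, Fintype.card_congr E]
    simp [sq]
  have hlower : vandSup τ (rectMonomials (n + 1) ∘ E ∘ .inl)
      ≤ vandSup ((fun z : ℂ × ℂ => (z.1 * z.2, z.1)) '' τ) (homMonomials (n + 1)) := by
    simpa using vandSup_le_mul_vandSup_image (d := 1) (c := 1) (lowerTriangleEquiv (n + 1))
      (by simp) fun p z _ => by simp [E, rectMonomials_of_le]
  have hupper : vandSup τ (rectMonomials (n + 1) ∘ E ∘ .inr)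
      ≤ c ^ (n + 1) ^ 2 * vandSup ((fun z : ℂ × ℂ => (z.1 * z.2, z.2)) '' τ)
        (homMonomials n) := by
    refine (vandSup_le_mul_vandSup_image (f := fun z : ℂ × ℂ => (z.1 * z.2, z.2))
      (m' := homMonomials n) (upperTriangleEquiv n) hτ fun p z _ => by
      simp [E, rectMonomials_of_not_le]).trans ?_
    gcongr
    · exact_mod_cast hc
    · omega
  calc vandSup τ (rectMonomials (n + 1))
      ≤ vandSup τ (rectMonomials (n + 1) ∘ E) := by
        simpa [Function.comp_def] using vandSup_comp_equiv_le E.symm (rectMonomials (n + 1) ∘ E)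
    _ ≤ _ := vandSup_sum_le _
    _ ≤ _ := by
        rw [hcard]
        refine (mul_le_mul' (mul_le_mul' le_rfl hlower) hupper).trans_eq ?_
        ring

theorem ENNReal.limsup_rpow_le_s13 {α : Type*} {f : Filter α} [f.NeBot] {u : α → ℝ≥0∞} {p : α → ℝ}
    {t : ℝ} (ht : 0 < t) (hp : Tendsto p f (𝓝 t)) (hu : limsup u f ≠ ∞) :
    limsup (fun a => u a ^ p a) f ≤ limsup u f ^ t := by
  set L := limsup u f
  have hL : L < ∞ := lt_top_iff_ne_top.2 hu
  have bound (X : ℝ≥0) (hLX : L < X) : limsup (fun a => u a ^ p a) f ≤ (X : ℝ≥0∞) ^ t := by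
    have hX : X ≠ 0 := ENNReal.coe_ne_zero.1 (zero_le.trans_lt hLX).ne'
    have hlim : Tendsto (fun a => (X : ℝ≥0∞) ^ p a) f (𝓝 ((X : ℝ≥0∞) ^ t)) := by
      simp_rw [← ENNReal.coe_rpow_of_ne_zero hX]
      exact ENNReal.tendsto_coe.2 (tendsto_const_nhds.nnrpow hp (.inl hX))
    rw [← hlim.limsup_eq]
    refine limsup_le_limsup ?_
    filter_upwards [eventually_lt_of_limsup_lt hLX, hp.eventually (lt_mem_nhds ht)] with a hua hpa
    exact ENNReal.rpow_le_rpow hua.le hpa.le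
  have : (𝓝[>] L).NeBot := nhdsGT_neBot_of_exists_gt ⟨∞, hL⟩
  refine ge_of_tendsto ((ENNReal.continuous_rpow_const.tendsto L).mono_left
    (nhdsWithin_le_nhds (s := Ioi L))) ?_
  filter_upwards [self_mem_nhdsWithin, nhdsWithin_le_nhds (Iio_mem_nhds hL)] with X hLX hX
  lift X to ℝ≥0 using hX.ne
  exact bound X hLX

theorem ENNReal.tendsto_natCast_add_one_rpow_div {a : ℝ} (ha : 0 ≤ a) :
    Tendsto (fun n : ℕ => ((n : ℝ≥0∞) + 1) ^ (a / n)) atTop (𝓝 1) := by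
  have hreal : Tendsto (fun n : ℕ => ((n : ℝ) + 1) ^ (a / n)) atTop (𝓝 1) := by
    refine ((tendsto_rpow_div_mul_add a 1 (-1) zero_ne_one).comp
      (tendsto_atTop_add_const_right _ 1 tendsto_natCast_atTop_atTop)).congr fun n => ?_
    simp
  refine (ENNReal.ofReal_one ▸ ENNReal.tendsto_ofReal hreal).congr fun n => ?_
  rw [← ENNReal.ofReal_rpow_of_nonneg (by positivity) (by positivity)]
  rw [ENNReal.ofReal_add (by positivity) zero_le_one, ENNReal.ofReal_natCast, ENNReal.ofReal_one]

theorem ENNReal.limsup_mul_le_mul {α : Type*} {f : Filter α} {u v : α → ℝ≥0∞} {a b : ℝ≥0∞}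
    (ha : a ≠ ∞) (hb : b ≠ ∞) (hu : limsup u f ≤ a) (hv : limsup v f ≤ b) :
    limsup (u * v) f ≤ a * b :=
  (ENNReal.limsup_mul_le' (.inr (ne_top_of_le_ne_top hb hv))
    (.inl (ne_top_of_le_ne_top ha hu))).trans (mul_le_mul' hu hv)

theorem tendsto_add_div_three_mul_add_one (a : ℝ) :
    Tendsto (fun n : ℕ => ((n : ℝ) + a) / (3 * ((n : ℝ) + 1))) atTop (𝓝 (1 / 3)) :=
  (tendsto_add_mul_div_add_mul_atTop_nhds a 3 1 three_ne_zero).congr fun n => by ring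

noncomputable def rectExponent (n : ℕ) : ℝ := 1 / ((n : ℝ) ^ 2 * ((n : ℝ) - 1))

noncomputable def homExponent (n : ℕ) : ℝ := 3 / ((n : ℝ) * ((n : ℝ) - 1) * ((n : ℝ) + 1))

theorem rectExponent_succ_eq_homExponent_succ_mul {n : ℕ} (hn : 1 ≤ n) :
    rectExponent (n + 1) = homExponent (n + 1) * (((n : ℝ) + 2) / (3 * ((n : ℝ) + 1))) := by
  have : (n : ℝ) ≠ 0 := by norm_cast; omega
  simp only [rectExponent, homExponent, Nat.cast_add, Nat.cast_one, add_sub_cancel_right]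
  field_simp
  ring

theorem rectExponent_succ_eq_homExponent_mul {n : ℕ} (hn : 2 ≤ n) :
    rectExponent (n + 1) = homExponent n * (((n : ℝ) - 1) / (3 * ((n : ℝ) + 1))) := by
  have : (n : ℝ) ≠ 0 := by norm_cast; omega
  have : (n : ℝ) - 1 ≠ 0 := by
    rw [sub_ne_zero]; norm_cast; omega
  simp only [rectExponent, homExponent, Nat.cast_add, Nat.cast_one, add_sub_cancel_right]
  field_simp

theorem natCast_cube_mul_homExponent_le {n : ℕ} (hn : 2 ≤ n) : (n : ℝ) ^ 3 * homExponent n ≤ 4 := by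
  have : (2 : ℝ) ≤ n := by exact_mod_cast hn
  have hpos : 0 < (n : ℝ) * ((n : ℝ) - 1) * ((n : ℝ) + 1) := by
    have : (0 : ℝ) < n - 1 := by linarith
    positivity
  rw [homExponent, mul_div_assoc', div_le_iff₀ hpos]
  nlinarith [mul_nonneg (by positivity : (0 : ℝ) ≤ n)
    (mul_nonneg (by linarith : (0 : ℝ) ≤ n - 2) (by linarith : (0 : ℝ) ≤ n + 2))]

theorem rectExponent_succ_nonneg (n : ℕ) : 0 ≤ rectExponent (n + 1) := by
  simp only [rectExponent, Nat.cast_add, Nat.cast_one, add_sub_cancel_right]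
  positivity

theorem homExponent_nonneg (n : ℕ) : 0 ≤ homExponent n := by
  rcases n with _ | n
  · simp [homExponent]
  · simp only [homExponent, Nat.cast_add, Nat.cast_one, add_sub_cancel_right]
    positivity

theorem limsup_factorial_mul_pow_rpow_rectExponent_le_one (c : ℝ≥0) :
    limsup (fun n : ℕ => (((n + 1) ^ 2)! * (c : ℝ≥0∞) ^ (n + 1) ^ 2) ^ rectExponent (n + 1))
      atTop ≤ 1 := by
  refine (limsup_le_limsup ?_).trans_eq
    (ENNReal.tendsto_natCast_add_one_rpow_div (a := 3) (by norm_num)).limsup_eq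
  filter_upwards [eventually_ge_atTop ⌈c⌉₊, eventually_ge_atTop 1] with n hcn hn
  set K := (n + 1) ^ 2
  have hc : (c : ℝ≥0∞) ≤ n + 1 := by
    have : c ≤ n := Nat.ceil_le.1 hcn
    exact le_add_right (by exact_mod_cast this)
  have hbase : (K ! : ℝ≥0∞) * (c : ℝ≥0∞) ^ K ≤ ((n : ℝ≥0∞) + 1) ^ ((3 * K : ℕ) : ℝ) := by
    rw [ENNReal.rpow_natCast, show 3 * K = 2 * K + K by ring, pow_add, pow_mul]
    gcongr
    calc (K ! : ℝ≥0∞) ≤ ((K ^ K : ℕ) : ℝ≥0∞) := by exact_mod_cast Nat.factorial_le_pow K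
      _ = _ := by push_cast [K]; rfl
  calc ((K ! : ℝ≥0∞) * (c : ℝ≥0∞) ^ K) ^ rectExponent (n + 1)
      ≤ (((n : ℝ≥0∞) + 1) ^ ((3 * K : ℕ) : ℝ)) ^ rectExponent (n + 1) := by
        gcongr
        exact rectExponent_succ_nonneg n
    _ = ((n : ℝ≥0∞) + 1) ^ (3 / (n : ℝ)) := by
        rw [← ENNReal.rpow_mul]
        congr 1
        have : (n : ℝ) ≠ 0 := by norm_cast; omega
        simp only [rectExponent, K, Nat.cast_mul, Nat.cast_pow, Nat.cast_add, Nat.cast_one,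
          Nat.cast_ofNat, add_sub_cancel_right]
        field_simp

theorem Bornology.IsBounded.exists_one_le_nnnorm_le {E : Type*} [SeminormedAddGroup E]
    {s : Set E} (hs : IsBounded s) : ∃ c : ℝ≥0, 1 ≤ c ∧ ∀ z ∈ s, ‖z‖₊ ≤ c := by
  obtain ⟨r, hr⟩ := hs.exists_norm_le
  refine ⟨max 1 r.toNNReal, le_max_left _ _, fun z hz => ?_⟩
  rw [← NNReal.coe_le_coe, coe_nnnorm]
  exact (hr z hz).trans ((Real.le_coe_toNNReal r).trans (by simp))

theorem Bornology.IsBounded.image_of_continuous {X Y : Type*} [PseudoMetricSpace X]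
    [ProperSpace X] [PseudoMetricSpace Y] {f : X → Y} (hf : Continuous f) {s : Set X}
    (hs : IsBounded s) : IsBounded (f '' s) :=
  (hs.isCompact_closure.image hf).isBounded.subset (image_mono subset_closure)

theorem vandSup_homMonomials_le {σ : Set (ℂ × ℂ)} {b : ℝ≥0} (hb : 1 ≤ b)
    (hσ : ∀ z ∈ σ, ‖z‖₊ ≤ b) (n : ℕ) :
    vandSup σ (homMonomials n) ≤ (4 * b : ℝ≥0∞) ^ n ^ 3 := by
  set K := Fintype.card (HomIndex n)
  have hKn : K ≤ n ^ 2 := by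
    simpa [K, sq] using Fintype.card_subtype_le fun p : Fin n × Fin n => (p.1 : ℕ) + p.2 < n
  have hK : K ≤ 4 ^ n := calc
    K ≤ n ^ 2 := hKn
    _ ≤ (2 ^ n) ^ 2 := Nat.pow_le_pow_left (Nat.lt_two_pow_self).le 2
    _ = 4 ^ n := by rw [← pow_mul, mul_comm, pow_mul]; norm_num
  have hentry : ∀ j, ∀ z ∈ σ, ‖homMonomials n j z‖₊ ≤ b ^ n := fun j z hz => calc
    ‖homMonomials n j z‖₊ ≤ b ^ (j.1.1 : ℕ) * b ^ (j.1.2 : ℕ) := by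
      rw [homMonomials, nnnorm_mul, nnnorm_pow, nnnorm_pow]
      have := hσ z hz
      gcongr
      · exact (norm_fst_le z).trans this
      · exact (norm_snd_le z).trans this
    _ ≤ b ^ n := by rw [← pow_add]; exact pow_le_pow_right₀ hb j.2.le
  refine (vandSup_le_of_forall_nnnorm_le hentry).trans ?_
  have h4b : (1 : ℝ≥0∞) ≤ 4 * b :=
    one_le_mul_of_one_le_of_one_le (by norm_num) (by exact_mod_cast hb)
  calc (K ! : ℝ≥0∞) * ((b ^ n : ℝ≥0) : ℝ≥0∞) ^ K ≤ (K : ℝ≥0∞) ^ K * (b : ℝ≥0∞) ^ (n * K) := by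
        push_cast
        rw [pow_mul]
        gcongr
        exact_mod_cast Nat.factorial_le_pow K
    _ ≤ (4 : ℝ≥0∞) ^ (n * K) * (b : ℝ≥0∞) ^ (n * K) := by
        rw [pow_mul (4 : ℝ≥0∞)]
        gcongr
        exact_mod_cast hK
    _ = (4 * b : ℝ≥0∞) ^ (n * K) := (mul_pow _ _ _).symm
    _ ≤ (4 * b : ℝ≥0∞) ^ n ^ 3 := by
        refine pow_le_pow_right₀ h4b ?_
        calc n * K ≤ n * n ^ 2 := Nat.mul_le_mul_left n hKn
          _ = n ^ 3 := by ring

theorem supHom_ne_top {σ : Set (ℂ × ℂ)} (hσ : IsBounded σ) : supHom σ ≠ ∞ := by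
  obtain ⟨b, hb, hσb⟩ := hσ.exists_one_le_nnnorm_le
  have h4b : (1 : ℝ≥0∞) ≤ 4 * b :=
    one_le_mul_of_one_le_of_one_le (by norm_num) (by exact_mod_cast hb)
  refine ne_top_of_le_ne_top (b := (4 * b : ℝ≥0∞) ^ (4 : ℝ)) (by finiteness) ?_
  refine limsup_le_of_le (by isBoundedDefault) (eventually_atTop.2 ⟨2, fun n hn => ?_⟩)
  calc vandSup σ (homMonomials n) ^ homExponent n
      ≤ ((4 * b : ℝ≥0∞) ^ n ^ 3) ^ homExponent n :=
        ENNReal.rpow_le_rpow (vandSup_homMonomials_le hb hσb n) (homExponent_nonneg n)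
    _ ≤ (4 * b : ℝ≥0∞) ^ (4 : ℝ) := by
        rw [← ENNReal.rpow_natCast, ← ENNReal.rpow_mul]
        exact ENNReal.rpow_le_rpow_of_exponent_le h4b
          (by exact_mod_cast natCast_cube_mul_homExponent_le hn)

theorem limsup_rpow_le_supHom_rpow {σ : Set (ℂ × ℂ)} (hσ : IsBounded σ) {p : ℕ → ℝ}
    (hp : Tendsto p atTop (𝓝 (1 / 3))) (k : ℕ) :
    limsup (fun n => (vandSup σ (homMonomials (n + k)) ^ homExponent (n + k)) ^ p n) atTop
      ≤ supHom σ ^ (1 / 3 : ℝ) := by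
  have hshift : limsup (fun n => vandSup σ (homMonomials (n + k)) ^ homExponent (n + k)) atTop
      = supHom σ := limsup_nat_add (fun n => vandSup σ (homMonomials n) ^ homExponent n) k
  refine (ENNReal.limsup_rpow_le_s13 (by norm_num) hp ?_).trans_eq (by rw [hshift])
  exact hshift ▸ supHom_ne_top hσ

theorem vandSup_rectMonomials_succ_rpow_le {τ : Set (ℂ × ℂ)} {c : ℝ≥0} (hc : 1 ≤ c)
    (hτ : ∀ z ∈ τ, ‖z.2‖₊ ≤ c) {n : ℕ} (hn : 2 ≤ n) :
    vandSup τ (rectMonomials (n + 1)) ^ rectExponent (n + 1)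
      ≤ (((n + 1) ^ 2)! * (c : ℝ≥0∞) ^ (n + 1) ^ 2) ^ rectExponent (n + 1)
        * (vandSup ((fun z : ℂ × ℂ => (z.1 * z.2, z.1)) '' τ) (homMonomials (n + 1))
            ^ homExponent (n + 1)) ^ (((n : ℝ) + 2) / (3 * ((n : ℝ) + 1)))
        * (vandSup ((fun z : ℂ × ℂ => (z.1 * z.2, z.2)) '' τ) (homMonomials n)
            ^ homExponent n) ^ (((n : ℝ) - 1) / (3 * ((n : ℝ) + 1))) := by
  have he := rectExponent_succ_nonneg n
  refine (ENNReal.rpow_le_rpow (vandSup_rectMonomials_succ_le hc hτ n) he).trans_eq ?_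
  rw [ENNReal.mul_rpow_of_nonneg _ _ he, ENNReal.mul_rpow_of_nonneg _ _ he, ← ENNReal.rpow_mul,
    ← ENNReal.rpow_mul, ← rectExponent_succ_eq_homExponent_succ_mul (by omega),
    ← rectExponent_succ_eq_homExponent_mul hn]

/-- For a bounded set `τ ⊆ ℂ²` and the maps `φ_x(x, y) = (xy, x)`
and `φ_y(x, y) = (xy, y)`:
`Sup^rec(τ) ≤ (Sup^hom(φ_x(τ)))^{1/3} · (Sup^hom(φ_y(τ)))^{1/3}`. -/
theorem supRec_le_supHom_phix_phiy (τ : Set (ℂ × ℂ)) (hτ : Bornology.IsBounded τ) :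
    supRec τ
      ≤ (supHom ((fun z : ℂ × ℂ => (z.1 * z.2, z.1)) '' τ)) ^ (1 / 3 : ℝ)
          * (supHom ((fun z : ℂ × ℂ => (z.1 * z.2, z.2)) '' τ)) ^ (1 / 3 : ℝ) := by
  set σx := (fun z : ℂ × ℂ => (z.1 * z.2, z.1)) '' τ
  set σy := (fun z : ℂ × ℂ => (z.1 * z.2, z.2)) '' τ
  have hx : IsBounded σx := hτ.image_of_continuous (by fun_prop)
  have hy : IsBounded σy := hτ.image_of_continuous (by fun_prop)
  have hσx := supHom_ne_top hx
  have hσy := supHom_ne_top hy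
  obtain ⟨c, hc, hτc⟩ := hτ.exists_one_le_nnnorm_le
  set F := fun n : ℕ => (((n + 1) ^ 2)! * (c : ℝ≥0∞) ^ (n + 1) ^ 2) ^ rectExponent (n + 1)
  set A := fun n : ℕ => (vandSup σx (homMonomials (n + 1)) ^ homExponent (n + 1))
    ^ (((n : ℝ) + 2) / (3 * ((n : ℝ) + 1)))
  set B := fun n : ℕ => (vandSup σy (homMonomials n) ^ homExponent n)
    ^ (((n : ℝ) - 1) / (3 * ((n : ℝ) + 1)))
  calc supRec τ = limsup (fun n => vandSup τ (rectMonomials (n + 1)) ^ rectExponent (n + 1))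
        atTop := (limsup_nat_add _ 1).symm
    _ ≤ limsup (F * A * B) atTop := limsup_le_limsup (eventually_atTop.2 ⟨2, fun n hn =>
        vandSup_rectMonomials_succ_rpow_le hc (fun z hz => (norm_snd_le z).trans (hτc z hz)) hn⟩)
    _ ≤ 1 * supHom σx ^ (1 / 3 : ℝ) * supHom σy ^ (1 / 3 : ℝ) :=
        ENNReal.limsup_mul_le_mul (by finiteness) (by finiteness)
          (ENNReal.limsup_mul_le_mul (by simp) (by finiteness)
            (limsup_factorial_mul_pow_rpow_rectExponent_le_one c)
            (limsup_rpow_le_supHom_rpow hx (tendsto_add_div_three_mul_add_one 2) 1))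
          (limsup_rpow_le_supHom_rpow hy
            (by simpa [sub_eq_add_neg] using tendsto_add_div_three_mul_add_one (-1)) 0)
    _ = _ := by rw [one_mul]
end

section
/- Let R = ℤ[u_1, u_2, u_3, u_4, u_5] / I, where I is the ideal generated by the five polynomials u_i u_{i+3} + u_{i+4} − 1 for i ∈ ℤ/5ℤ (indices taken modulo 5, i.e. the relations u_1u_4 + u_5 = 1, u_2u_5 + u_1 = 1, u_3u_1 + u_2 = 1, u_4u_2 + u_3 = 1, u_5u_3 + u_4 = 1). Then R is a free ℤ-module with basis given by the image of 1 together with the images of the monomials u_i^a u_{i+1}^b for i ∈ ℤ/5ℤ, a ≥ 1 and b ≥ 0 (indices modulo 5). -/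
open MvPolynomial

/-- The ideal of the dihedral relations `u_i u_{i+3} + u_{i+4} = 1` (indices mod 5)
in `ℤ[u_1, …, u_5]`, defining the affine ring of `M₀,₅^δ`. -/
noncomputable def dihedralIdeal : Ideal (MvPolynomial (Fin 5) ℤ) :=
  Ideal.span (Set.range fun i : Fin 5 => X i * X (i + 3) + X (i + 4) - 1)

/-- The candidate `ℤ`-basis of `ℤ[u_1, …, u_5]/I`: the image of `1` together with
the images of the monomials `u_i^a u_{i+1}^b` for `i ∈ ℤ/5`, `a ≥ 1`, `b ≥ 0`. -/
noncomputable def dihedralBasisFam :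
    Unit ⊕ (Fin 5 × {a : ℕ // 1 ≤ a} × ℕ) → MvPolynomial (Fin 5) ℤ ⧸ dihedralIdeal
  | Sum.inl _ => 1
  | Sum.inr (i, a, b) =>
      Ideal.Quotient.mk dihedralIdeal (X i) ^ (a : ℕ)
        * Ideal.Quotient.mk dihedralIdeal (X (i + 1)) ^ b

/-!
Spanning: the relations rewrite `u_i u_{i+3}` as `1 - u_{i+4}`, which lowers the degree, and a
monomial containing no product `u_i u_{i+3}` is `1` or of the form `u_i^a u_{i+1}^b`.

Independence: on the torus of `M₀,₅` every `u_i` is a Laurent polynomial in `x = u_1`, `y = u_2`.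
Realise this as a ring map from `R` to the Hahn series `ℤ⟦Lex (ℤ × ℤ)⟧`. The valuation of the
image of `u_i^a u_{i+1}^b` is `a w_i + b w_{i+1}`, where `w_i` is the valuation of `u_i`; these
exponents fill the five cones of the complete fan in `ℤ²` spanned by consecutive `w_i`, so they
are pairwise distinct, and series of pairwise distinct valuations are linearly independent.
-/

section Spanning

open Finsupp (single)

local notation "mk" => Ideal.Quotient.mk dihedralIdeal

theorem mk_X_mul_mk_X_add_three (i : Fin 5) :
    mk (X i) * mk (X (i + 3)) = 1 - mk (X (i + 4)) := by
  have h : mk (X i * X (i + 3) + X (i + 4) - 1) = 0 :=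
    Ideal.Quotient.eq_zero_iff_mem.mpr (Ideal.subset_span ⟨i, rfl⟩)
  rw [map_sub, map_add, map_mul, map_one] at h
  linear_combination h

theorem exists_eq_single_add_single_of_forall_eq_zero_or {e : Fin 5 →₀ ℕ}
    (h : ∀ i, e i = 0 ∨ e (i + 3) = 0) (he : e ≠ 0) :
    ∃ i, e i ≠ 0 ∧ e = single i (e i) + single (i + 1) (e (i + 1)) := by
  have pattern : ∀ p : Fin 5 → Bool, (∀ i, p i = false ∨ p (i + 3) = false) →
      (∃ i, p i = true) → ∃ i, p i = true ∧ ∀ j, p j = true → j = i ∨ j = i + 1 := by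
    decide
  obtain ⟨i, hi, hsupp⟩ := pattern (fun j => e j ≠ 0) (by simpa using h)
    (by simpa [Finsupp.ext_iff] using he)
  refine ⟨i, by simpa using hi, Finsupp.ext fun j => ?_⟩
  have hne : i ≠ i + 1 := by simp
  by_cases hj : j = i ∨ j = i + 1
  · rcases hj with rfl | rfl <;> simp [hne, hne.symm]
  · have hj' := not_or.mp hj
    have hej : e j = 0 := by simpa using mt (hsupp j) hj
    simp [hej, Ne.symm hj'.1, Ne.symm hj'.2]

theorem mk_monomial_mem_span_dihedralBasisFam (e : Fin 5 →₀ ℕ) :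
    mk (monomial e 1) ∈ Submodule.span ℤ (Set.range dihedralBasisFam) := by
  induction hn : e.degree using Nat.strong_induction_on generalizing e with
  | _ n ih =>
  by_cases hred : ∃ i, e i ≠ 0 ∧ e (i + 3) ≠ 0
  · obtain ⟨i, hi, hi3⟩ := hred
    have h1 : single i 1 ≤ e := Finsupp.single_le_iff.mpr (Nat.one_le_iff_ne_zero.mpr hi)
    have h2 : single (i + 3) 1 ≤ e - single i 1 := by
      have hne : i + 3 ≠ i := by simp
      refine Finsupp.single_le_iff.mpr ?_
      simp [hne]
      omega
    set f := e - single i 1 - single (i + 3) 1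
    have hef : e = f + single (i + 3) 1 + single i 1 := by
      rw [tsub_add_cancel_of_le h2, tsub_add_cancel_of_le h1]
    have hdeg : f.degree + 2 = n := by
      rw [← hn, hef, map_add, map_add, Finsupp.degree_single, Finsupp.degree_single]
    have hdeg' : (f + single (i + 4) 1).degree + 1 = n := by
      rw [map_add, Finsupp.degree_single]
      omega
    have hrel : mk (monomial e 1) =
        mk (monomial f 1) - mk (monomial (f + single (i + 4) 1) 1) := by
      simp only [hef, monomial_add_single, pow_one, map_mul, mul_assoc,
        mul_comm (mk (X (i + 3))), mk_X_mul_mk_X_add_three]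
      ring
    rw [hrel]
    exact sub_mem (ih _ (by omega) f rfl) (ih _ (by omega) _ rfl)
  · have hirr : ∀ i, e i = 0 ∨ e (i + 3) = 0 := fun i => by
      by_contra h
      exact hred ⟨i, not_or.mp h⟩
    obtain rfl | he := eq_or_ne e 0
    · exact Submodule.subset_span ⟨Sum.inl (), by simp [dihedralBasisFam]⟩
    obtain ⟨i, hi, hei⟩ := exists_eq_single_add_single_of_forall_eq_zero_or hirr he
    refine Submodule.subset_span
      ⟨Sum.inr (i, ⟨e i, Nat.one_le_iff_ne_zero.mpr hi⟩, e (i + 1)), ?_⟩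
    conv_rhs => rw [hei]
    simp [dihedralBasisFam, monomial_add_single, ← X_pow_eq_monomial]

theorem span_dihedralBasisFam_eq_top :
    Submodule.span ℤ (Set.range dihedralBasisFam) = ⊤ := by
  rw [eq_top_iff]
  rintro r -
  obtain ⟨p, rfl⟩ := Ideal.Quotient.mk_surjective r
  induction p using MvPolynomial.induction_on' with
  | monomial e c =>
    rw [← mul_one c, ← smul_eq_mul, ← smul_monomial, map_zsmul]
    exact Submodule.smul_mem _ c (mk_monomial_mem_span_dihedralBasisFam e)
  | add p q hp hq =>
    rw [map_add]
    exact add_mem hp hq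

end Spanning

section TorusPoint

variable {S : Type*} [CommRing S]

/-- The point of the torus of `M₀,₅` with `u_1 = x` and `u_2 = y` (`Fin 5` counts from `0`). -/
def dihedralTorusPoint (x y : Sˣ) : Fin 5 → S :=
  ![x, y, ↑x⁻¹ * (1 - y), ↑x⁻¹ * ↑y⁻¹ * (x + y - 1), ↑y⁻¹ * (1 - x)]

theorem dihedralTorusPoint_mul_add_eq_one (x y : Sˣ) (i : Fin 5) :
    dihedralTorusPoint x y i * dihedralTorusPoint x y (i + 3) + dihedralTorusPoint x y (i + 4)
      = 1 := by
  have hx := x.mul_inv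
  have hy := y.mul_inv
  fin_cases i <;> simp [dihedralTorusPoint]
  · linear_combination (↑y⁻¹ * (↑x + ↑y - 1) : S) * hx + hy
  · linear_combination (1 - (y : S)) * hx
  · linear_combination (↑x⁻¹ * (↑x + ↑y - 1) : S) * hy + hx
  · linear_combination ((y : S) * ↑y⁻¹) * hx + hy

theorem dihedralIdeal_le_ker_eval₂Hom (x y : Sˣ) :
    dihedralIdeal ≤ RingHom.ker (eval₂Hom (Int.castRingHom S) (dihedralTorusPoint x y)) :=
  Ideal.span_le.mpr <| by
    rintro _ ⟨i, rfl⟩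
    simp [dihedralTorusPoint_mul_add_eq_one]

noncomputable def dihedralTorusEval (x y : Sˣ) : MvPolynomial (Fin 5) ℤ ⧸ dihedralIdeal →+* S :=
  Ideal.Quotient.lift dihedralIdeal (eval₂Hom (Int.castRingHom S) (dihedralTorusPoint x y))
    fun _ hp => dihedralIdeal_le_ker_eval₂Hom x y hp

@[simp]
theorem dihedralTorusEval_mk (x y : Sˣ) (p : MvPolynomial (Fin 5) ℤ) :
    dihedralTorusEval x y (Ideal.Quotient.mk dihedralIdeal p) =
      eval₂Hom (Int.castRingHom S) (dihedralTorusPoint x y) p :=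
  Ideal.Quotient.lift_mk _ _ _

end TorusPoint

namespace HahnSeries

theorem linearIndependent_of_injective_orderTop {Γ R ι : Type*} [LinearOrder Γ] [Ring R]
    [NoZeroDivisors R] {f : ι → HahnSeries Γ R} (hf : ∀ i, f i ≠ 0)
    (hinj : Function.Injective fun i => (f i).orderTop) : LinearIndependent R f := by
  classical
  rw [linearIndependent_iff']
  intro s c hsum i hi
  by_contra hci
  obtain ⟨j, hj, hmin⟩ := (s.filter (c · ≠ 0)).exists_min_image (fun k => (f k).orderTop)
    ⟨i, Finset.mem_filter.mpr ⟨hi, hci⟩⟩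
  rw [Finset.mem_filter] at hj
  obtain ⟨g, hg⟩ := WithTop.ne_top_iff_exists.mp (orderTop_ne_top.mpr (hf j))
  have hcoeff : (∑ k ∈ s, c k • f k).coeff g = c j * (f j).coeff g := by
    rw [coeff_sum, Finset.sum_eq_single_of_mem j hj.1, coeff_smul, smul_eq_mul]
    intro k hk hkj
    by_cases hck : c k = 0
    · simp [hck]
    have hlt : (f j).orderTop < (f k).orderTop :=
      (hmin k (Finset.mem_filter.mpr ⟨hk, hck⟩)).lt_of_ne fun h => hkj (hinj h).symm
    rw [coeff_smul, coeff_eq_zero_of_lt_orderTop (hg ▸ hlt), smul_zero]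
  rw [hsum, coeff_zero] at hcoeff
  exact mul_ne_zero hj.2 (coeff_orderTop_ne hg.symm) hcoeff.symm

section SingleUnit

variable {Γ R : Type*} [AddCommGroup Γ] [PartialOrder Γ] [IsOrderedAddMonoid Γ] [Semiring R]

noncomputable def singleUnit (g : Γ) : (HahnSeries Γ R)ˣ where
  val := single g 1
  inv := single (-g) 1
  val_inv := by simp
  inv_val := by simp

@[simp]
theorem val_singleUnit (g : Γ) : (singleUnit g : (HahnSeries Γ R)ˣ) = single g (1 : R) := rfl

@[simp]
theorem val_inv_singleUnit (g : Γ) :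
    ((singleUnit g)⁻¹ : (HahnSeries Γ R)ˣ) = single (-g) (1 : R) := rfl

end SingleUnit

variable {Γ R : Type*} [AddCommGroup Γ] [LinearOrder Γ] [IsOrderedAddMonoid Γ]
variable [Ring R] [IsDomain R]

@[simp]
theorem addVal_single_one (g : Γ) : addVal Γ R (single g 1) = g := by
  rw [addVal_apply, orderTop_single one_ne_zero]

theorem addVal_one_sub {z : HahnSeries Γ R} (hz : 0 < addVal Γ R z) :
    addVal Γ R (1 - z) = 0 := by
  rw [addVal_apply] at hz ⊢
  rw [orderTop_sub (by rwa [orderTop_one]), orderTop_one]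

theorem addVal_sub_one {z : HahnSeries Γ R} (hz : 0 < addVal Γ R z) :
    addVal Γ R (z - 1) = 0 := by
  rw [← neg_sub, AddValuation.map_neg, addVal_one_sub hz]

end HahnSeries

section HahnEval

open HahnSeries

noncomputable abbrev dihedralHahnEval :
    MvPolynomial (Fin 5) ℤ ⧸ dihedralIdeal →+* HahnSeries (Lex (ℤ × ℤ)) ℤ :=
  dihedralTorusEval (singleUnit (toLex (1, 0))) (singleUnit (toLex (0, 1)))

def dihedralWeight : Fin 5 → ℤ × ℤ := ![(1, 0), (0, 1), (-1, 0), (-1, -1), (0, -1)]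

theorem addVal_dihedralHahnEval_mk_X (i : Fin 5) :
    addVal _ _ (dihedralHahnEval (Ideal.Quotient.mk dihedralIdeal (X i))) =
      toLex (dihedralWeight i) := by
  rw [dihedralTorusEval_mk, eval₂Hom_X']
  have hx : (0 : WithTop (Lex (ℤ × ℤ))) < addVal _ ℤ (single (toLex (1, 0)) 1) := by
    rw [addVal_single_one]
    exact WithTop.coe_lt_coe.mpr (by decide)
  have hy : (0 : WithTop (Lex (ℤ × ℤ))) < addVal _ ℤ (single (toLex (0, 1)) 1) := by
    rw [addVal_single_one]
    exact WithTop.coe_lt_coe.mpr (by decide)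
  have hxy := lt_min hx hy |>.trans_le (AddValuation.map_add _ _ _)
  fin_cases i <;>
    simp only [Fin.reduceFinMk, Matrix.cons_val, dihedralTorusPoint, dihedralWeight,
      val_singleUnit, val_inv_singleUnit, AddValuation.map_mul, addVal_single_one,
      addVal_one_sub hx, addVal_one_sub hy, addVal_sub_one hxy, add_zero,
      ← WithTop.coe_add] <;>
    rfl

def dihedralExponent : Unit ⊕ (Fin 5 × {a : ℕ // 1 ≤ a} × ℕ) → ℤ × ℤ
  | Sum.inl _ => 0
  | Sum.inr (i, a, b) => (a : ℕ) • dihedralWeight i + b • dihedralWeight (i + 1)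

theorem dihedralExponent_injective : Function.Injective dihedralExponent := by
  rintro (_ | ⟨i, ⟨a, ha⟩, b⟩) (_ | ⟨j, ⟨c, hc⟩, d⟩) h
  · rfl
  · fin_cases j <;> simp [dihedralExponent, dihedralWeight, Prod.ext_iff] at h <;> omega
  · fin_cases i <;> simp [dihedralExponent, dihedralWeight, Prod.ext_iff] at h <;> omega
  · fin_cases i <;> fin_cases j <;>
      simp [dihedralExponent, dihedralWeight, Prod.ext_iff] at h ⊢ <;> omega

theorem addVal_dihedralHahnEval_basisFam (j : Unit ⊕ (Fin 5 × {a : ℕ // 1 ≤ a} × ℕ)) :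
    addVal _ _ (dihedralHahnEval (dihedralBasisFam j)) = toLex (dihedralExponent j) := by
  rcases j with _ | ⟨i, a, b⟩
  · simp [dihedralBasisFam, dihedralExponent]
  · simp only [dihedralBasisFam, dihedralExponent, map_mul, map_pow, AddValuation.map_mul,
      AddValuation.map_pow, addVal_dihedralHahnEval_mk_X]
    rw [toLex_add, WithTop.coe_add, toLex_smul, toLex_smul]
    rfl

theorem dihedralBasisFam_linearIndependent : LinearIndependent ℤ dihedralBasisFam := by
  have hval := addVal_dihedralHahnEval_basisFam
  have hne (j) : dihedralHahnEval (dihedralBasisFam j) ≠ 0 := fun h => by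
    simpa [h] using hval j
  have hinj : Function.Injective fun j => (dihedralHahnEval (dihedralBasisFam j)).orderTop := by
    intro j k h
    simp only [← addVal_apply, hval] at h
    exact dihedralExponent_injective (toLex.injective (WithTop.coe_injective h))
  exact (linearIndependent_of_injective_orderTop hne hinj).of_comp
    dihedralHahnEval.toIntAlgHom.toLinearMap

end HahnEval

/-- The quotient `R = ℤ[u_1, …, u_5]/(u_i u_{i+3} + u_{i+4} − 1)_{i ∈ ℤ/5}`
is a free `ℤ`-module with basis given by the image of `1` together with the images
of the monomials `u_i^a u_{i+1}^b` for `i ∈ ℤ/5`, `a ≥ 1`, `b ≥ 0`. -/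
theorem dihedral_quotient_free_basis :
    LinearIndependent ℤ dihedralBasisFam ∧
      Submodule.span ℤ (Set.range dihedralBasisFam) = ⊤ :=
  ⟨dihedralBasisFam_linearIndependent, span_dihedralBasisFam_eq_top⟩
end

section
/- For all real numbers x, y with 0 ≤ x ≤ 1 and 0 ≤ y ≤ 1 and (x, y) ≠ (1, 1), one has x(1−x)y(1−y)/(1−xy) ≤ (5√5 − 11)/2, with equality if and only if x = y = (√5 − 1)/2. -/
set_option maxHeartbeats 1000000 in
/-- For `0 ≤ x, y ≤ 1` with `(x, y) ≠ (1, 1)`, one has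
`x(1−x)y(1−y)/(1−xy) ≤ (5√5 − 11)/2`, with equality iff `x = y = (√5 − 1)/2`. -/
theorem apery_integrand_max (x y : ℝ)
    (hx0 : 0 ≤ x) (hx1 : x ≤ 1) (hy0 : 0 ≤ y) (hy1 : y ≤ 1)
    (hxy : (x, y) ≠ (1, 1)) :
    x * (1 - x) * y * (1 - y) / (1 - x * y) ≤ (5 * Real.sqrt 5 - 11) / 2 ∧
      (x * (1 - x) * y * (1 - y) / (1 - x * y) = (5 * Real.sqrt 5 - 11) / 2 ↔
        x = (Real.sqrt 5 - 1) / 2 ∧ y = (Real.sqrt 5 - 1) / 2) := by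
  set s : ℝ := Real.sqrt 5 with hsdef
  have hs : s ^ 2 = 5 := Real.sq_sqrt (by norm_num)
  have hs0 : 0 ≤ s := Real.sqrt_nonneg 5
  have hs2 : 2 < s := by nlinarith [hs, hs0]
  set a : ℝ := Real.sqrt x with hadef
  set b : ℝ := Real.sqrt y with hbdef
  have ha0 : 0 ≤ a := Real.sqrt_nonneg x
  have hb0 : 0 ≤ b := Real.sqrt_nonneg y
  have hax : a ^ 2 = x := Real.sq_sqrt hx0
  have hby : b ^ 2 = y := Real.sq_sqrt hy0
  have ha1 : a ≤ 1 := by rw [hadef]; exact Real.sqrt_le_one.2 hx1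
  have hb1 : b ≤ 1 := by rw [hbdef]; exact Real.sqrt_le_one.2 hy1
  clear_value s a b
  -- the key algebraic identity
  have hid : (5 * s - 11) / 2 * (1 - x * y) - x * (1 - x) * y * (1 - y)
      = (1 - a * b) * (a * b - (s - 1) / 2) ^ 2 * (a * b + s - 2)
        + (a * b) ^ 2 * (a - b) ^ 2 := by
    rw [← hax, ← hby]
    linear_combination (1 - s / 4 - a * b / 4 + a * b * s / 4 - 3 / 4 * (a * b) ^ 2) * hs
  have hab1 : a * b ≤ 1 := by nlinarith
  have hT1 : 0 ≤ (1 - a * b) * (a * b - (s - 1) / 2) ^ 2 * (a * b + s - 2) := by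
    apply mul_nonneg (mul_nonneg (by linarith) (sq_nonneg _))
    nlinarith [mul_nonneg ha0 hb0]
  have hT2 : 0 ≤ (a * b) ^ 2 * (a - b) ^ 2 := by positivity
  have hP : 0 ≤ (5 * s - 11) / 2 * (1 - x * y) - x * (1 - x) * y * (1 - y) := by
    rw [hid]; linarith
  -- 1 - x*y > 0
  have hD : 0 < 1 - x * y := by
    rcases lt_or_eq_of_le hx1 with h | h
    · nlinarith
    · have hy' : y ≠ 1 := by
        intro hy'
        exact hxy (by rw [h, hy'])
      have : y < 1 := lt_of_le_of_ne hy1 hy'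
      nlinarith
  constructor
  · rw [div_le_iff₀ hD]; linarith
  · constructor
    · intro heq
      rw [div_eq_iff (ne_of_gt hD)] at heq
      have hz : (1 - a * b) * (a * b - (s - 1) / 2) ^ 2 * (a * b + s - 2)
          + (a * b) ^ 2 * (a - b) ^ 2 = 0 := by
        rw [← hid]; linarith
      have hz1 : (1 - a * b) * (a * b - (s - 1) / 2) ^ 2 * (a * b + s - 2) = 0 := by
        linarith
      have hz2 : (a * b) ^ 2 * (a - b) ^ 2 = 0 := by linarith
      have hpos : 0 < a * b + s - 2 := by nlinarith [mul_nonneg ha0 hb0]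
      have hz1' : (1 - a * b) * (a * b - (s - 1) / 2) ^ 2 = 0 := by
        rcases mul_eq_zero.1 hz1 with h | h
        · exact h
        · exact absurd h (ne_of_gt hpos)
      rcases mul_eq_zero.1 hz1' with h | h
      · -- a*b = 1 forces x = y = 1, contradiction
        exfalso
        have hab : a * b = 1 := by linarith
        have haa : a = 1 := by nlinarith
        have hbb : b = 1 := by nlinarith
        apply hxy
        have : x = 1 := by rw [← hax, haa]; norm_num
        have : y = 1 := by rw [← hby, hbb]; norm_num
        simp_all
      · have hab : a * b = (s - 1) / 2 := by
          have := pow_eq_zero_iff (n := 2) (by norm_num) |>.1 h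
          linarith
        have habpos : 0 < a * b := by rw [hab]; linarith
        have haeb : a = b := by
          have h2 : (a - b) ^ 2 = 0 := by
            rcases mul_eq_zero.1 hz2 with h' | h'
            · exact absurd h' (by positivity)
            · exact h'
          have := pow_eq_zero_iff (n := 2) (by norm_num) |>.1 h2
          linarith
        have hx' : x = (s - 1) / 2 := by
          rw [← hax, ← hab, haeb]; ring
        have hy' : y = (s - 1) / 2 := by
          rw [← hby, ← hab, haeb]; ring
        exact ⟨hx', hy'⟩
    · rintro ⟨hx', hy'⟩
      rw [hx', hy']
      rw [div_eq_iff]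
      · linear_combination (-15 / 16 + s / 8 + s ^ 2 / 16) * hs
      · rw [hx', hy'] at hD
        exact ne_of_gt hD
end

section
/- Let D = {(x, y) ∈ [0,1]² : xy < 1} and define f : D → ℝ² by f(x, y) = ( y(1−x)/(1−xy), x(1−y) ). Then the image f(D) equals the set { (u, v) ∈ ℝ² : 0 ≤ v ≤ 1 and 0 ≤ u ≤ ((1−v)/(1+v))² }. -/
/-!
Put `v = x(1 - y)`, `a = xy` and `b = 1 - x`, so that `a + b + v = 1` and, for `x > 0`, the first
coordinate is `ab / (ab + v)`. For fixed `v > 0` this is increasing in the product `ab`, which takes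
every value in `[0, ((1 - v)/2)²]` as `a, b ≥ 0` range over `a + b = 1 - v`; at the maximum it equals
`((1 - v)/(1 + v))²`. The upper bound on the whole square is the polynomial identity
`(1 - v)² (1 - xy) - y(1 - x)(1 + v)² = (1 - y)(x + xy - 1)²`.
-/

lemma exists_add_eq_mul_eq {s p : ℝ} (hs : 0 ≤ s) (hp : 0 ≤ p) (hps : 4 * p ≤ s ^ 2) :
    ∃ a b : ℝ, 0 ≤ a ∧ 0 ≤ b ∧ a + b = s ∧ a * b = p := by
  have hd : 0 ≤ s ^ 2 - 4 * p := by linarith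
  have hsqrt : √(s ^ 2 - 4 * p) ≤ s := (Real.sqrt_le_left hs).2 (by linarith)
  refine ⟨(s + √(s ^ 2 - 4 * p)) / 2, (s - √(s ^ 2 - 4 * p)) / 2, by positivity, by linarith,
    by ring, ?_⟩
  linear_combination (-1 / 4 : ℝ) * Real.sq_sqrt hd

lemma fst_le_sq_of_mul_lt_one {x y : ℝ} (hx0 : 0 ≤ x) (hy1 : y ≤ 1)
    (hxy : x * y < 1) :
    y * (1 - x) / (1 - x * y) ≤ ((1 - x * (1 - y)) / (1 + x * (1 - y))) ^ 2 := by
  have hv : 0 ≤ x * (1 - y) := mul_nonneg hx0 (by linarith)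
  rw [div_pow, div_le_div_iff₀ (by linarith) (by positivity)]
  have key : (1 - x * (1 - y)) ^ 2 * (1 - x * y) - y * (1 - x) * (1 + x * (1 - y)) ^ 2
      = (1 - y) * (x + x * y - 1) ^ 2 := by ring
  linarith [mul_nonneg (sub_nonneg.2 hy1) (sq_nonneg (x + x * y - 1))]

lemma fst_eq_of_add_add_eq_one {a b v : ℝ} (ha : 0 ≤ a) (hv : 0 < v)
    (habv : a + b + v = 1) :
    a / (a + v) * (1 - (a + v)) / (1 - (a + v) * (a / (a + v))) = a * b / (a * b + v) := by
  have hav : 0 < a + v := by linarith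
  have hx : (a + v) * (a / (a + v)) = a := by field_simp
  rw [hx, show 1 - (a + v) = b by linarith, show 1 - a = b + v by linarith,
    show a * b + v = (a + v) * (b + v) by linear_combination -v * habv]
  field_simp

lemma exists_mem_unitSquare_of_pos {u v : ℝ} (hv : 0 < v) (hv1 : v ≤ 1) (hu0 : 0 ≤ u)
    (hu : u ≤ ((1 - v) / (1 + v)) ^ 2) :
    ∃ x y : ℝ, (0 ≤ x ∧ x ≤ 1 ∧ 0 ≤ y ∧ y ≤ 1 ∧ x * y < 1) ∧
      y * (1 - x) / (1 - x * y) = u ∧ x * (1 - y) = v := by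
  have hu' : u * (1 + v) ^ 2 ≤ (1 - v) ^ 2 := by
    rwa [div_pow, le_div_iff₀ (by positivity)] at hu
  have hu1 : u < 1 := by nlinarith
  obtain ⟨a, b, ha, hb, hab, hprod⟩ :=
    exists_add_eq_mul_eq (s := 1 - v) (p := u * v / (1 - u)) (by linarith)
      (div_nonneg (by positivity) (by linarith))
      (by rw [mul_div_assoc', div_le_iff₀ (by linarith)]; nlinarith)
  have hav : 0 < a + v := by linarith
  refine ⟨a + v, a / (a + v), ⟨hav.le, by linarith, by positivity,
    (div_le_one hav).2 (by linarith), ?_⟩, ?_, ?_⟩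
  · rw [mul_div_cancel₀ _ hav.ne']
    linarith
  · rw [fst_eq_of_add_add_eq_one ha hv (by linarith : a + b + v = 1), hprod,
      div_eq_iff (by positivity), div_add' _ _ _ (by linarith)]
    field_simp
    ring
  · field_simp
    ring

/-- The image of `D = {(x, y) ∈ [0,1]² : xy < 1}` under
`f(x, y) = (y(1−x)/(1−xy), x(1−y))` equals
`{(u, v) : 0 ≤ v ≤ 1 and 0 ≤ u ≤ ((1−v)/(1+v))²}`. -/
theorem image_f_unit_square :
    (fun p : ℝ × ℝ => (p.2 * (1 - p.1) / (1 - p.1 * p.2), p.1 * (1 - p.2))) ''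
        {p : ℝ × ℝ | 0 ≤ p.1 ∧ p.1 ≤ 1 ∧ 0 ≤ p.2 ∧ p.2 ≤ 1 ∧ p.1 * p.2 < 1}
      = {q : ℝ × ℝ | 0 ≤ q.2 ∧ q.2 ≤ 1 ∧ 0 ≤ q.1 ∧ q.1 ≤ ((1 - q.2) / (1 + q.2)) ^ 2} := by
  ext ⟨u, v⟩
  simp only [Set.mem_image, Set.mem_ofPred_eq, Prod.mk.injEq, Prod.exists]
  constructor
  · rintro ⟨x, y, ⟨hx0, hx1, hy0, hy1, hxy⟩, rfl, rfl⟩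
    exact ⟨mul_nonneg hx0 (by linarith), by nlinarith,
      div_nonneg (mul_nonneg hy0 (by linarith)) (by linarith),
      fst_le_sq_of_mul_lt_one hx0 hy1 hxy⟩
  · rintro ⟨hv0, hv1, hu0, hu⟩
    rcases hv0.eq_or_lt with rfl | hv
    · exact ⟨0, u, ⟨le_rfl, zero_le_one, hu0, by simpa using hu, by simp⟩, by simp, by simp⟩
    · exact exists_mem_unitSquare_of_pos hv hv1 hu0 hu
end
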